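/- arXiv:1210.0336 — 9 statements merged into one kernel-verified Lean document; each statement's English description precedes it below -/
import Mathlib

section
/- Let Γ be an infinite group with trivial center and let G = Γ × Γ act on Γ by left–right multiplication (g,h)·k = g k h⁻¹. Then for every (g,h) ∈ G with (g,h) ≠ (e,e), the set {k ∈ Γ | g k h⁻¹ ≠ k} is infinite. -/
/-! If `g k h⁻¹ = k` for all but finitely many `k`, then for every `x` some `k` satisfies both
`g k = k h` and `g (x k) = (x k) h`, since the two cofinite conditions meet in the infinite group `Γ`.
Then `x g k = x k h = g x k`, so `g` is central, hence `g = 1` and then `h = 1`. -/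

open Filter

theorem Subgroup.mem_center_of_eventually_mul_eq_mul {Γ : Type*} [Group Γ] [Infinite Γ] {g h : Γ}
    (hfix : ∀ᶠ k in cofinite, g * k = k * h) : g ∈ Subgroup.center Γ := by
  rw [Subgroup.mem_center_iff]
  intro x
  obtain ⟨k, hk, hxk⟩ :=
    (hfix.and ((mul_right_injective x).tendsto_cofinite.eventually hfix)).exists
  refine mul_right_cancel (b := k) ?_
  calc x * g * k = x * (k * h) := by rw [mul_assoc, hk]
    _ = g * (x * k) := by rw [hxk, mul_assoc]
    _ = g * x * k := (mul_assoc g x k).symm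

/-- if `Γ` is an infinite group with trivial center and `G = Γ × Γ` acts on `Γ`
by left-right multiplication `(g,h)·k = g k h⁻¹`, then for every `(g,h) ≠ (e,e)` the set
`{k ∈ Γ | g k h⁻¹ ≠ k}` is infinite. -/
theorem stmt_0 {Γ : Type*} [Group Γ] [Infinite Γ]
    (hZ : Subgroup.center Γ = ⊥) (g h : Γ) (hgh : (g, h) ≠ ((1 : Γ), (1 : Γ))) :
    {k : Γ | g * k * h⁻¹ ≠ k}.Infinite := by
  by_contra hfin
  have hfix : ∀ᶠ k in cofinite, g * k = k * h := by
    rw [eventually_cofinite]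
    simpa [mul_inv_eq_iff_eq_mul] using hfin
  have hg : g = 1 := by
    simpa [hZ] using Subgroup.mem_center_of_eventually_mul_eq_mul hfix
  obtain ⟨k, hk⟩ := hfix.exists
  have hh : h = 1 := by simpa [hg] using hk
  exact hgh (by rw [hg, hh])
end

section
/- Let Γ be an infinite group with trivial center, H a nontrivial abelian group, 𝓗 = H^(Γ) the restricted direct sum, and 𝓖 = 𝓗 ⋊ (Γ × Γ) the left–right wreath product. Let 𝓗₀ be the kernel of the homomorphism p : 𝓗 → H, p(x) = Σ_{g∈Γ} x_g. Then for every x ∈ 𝓖 with x ∉ 𝓗, the set {z x z⁻¹ | z ∈ 𝓗₀} is infinite. -/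
noncomputable section

/-- The left-right translation bijection `k ↦ g k h⁻¹` of `Γ` associated to `(g,h) ∈ Γ × Γ`. -/
def lrEquiv {Γ : Type*} [Group Γ] (p : Γ × Γ) : Γ ≃ Γ :=
  (Equiv.mulRight p.2⁻¹).trans (Equiv.mulLeft p.1)

/-- The multiplicative group structure that `AddAut M` carried in the older Mathlib
(composition as multiplication); current Mathlib makes `AddAut M` an additive group instead. -/
instance addAutOldGroup {M : Type*} [Add M] : Group (AddAut M) where
  mul g h := AddEquiv.trans h g
  one := AddEquiv.refl _
  inv := AddEquiv.symm
  mul_assoc _ _ _ := rfl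
  one_mul _ := rfl
  mul_one _ := rfl
  inv_mul_cancel := AddEquiv.self_trans_symm

/-- The left-right action of `Γ × Γ` on the base `H^(Γ)` of the wreath product,
`((g,h)·x)_k = x_{g⁻¹ k h}`. -/
def lrAddAut (Γ H : Type*) [Group Γ] [AddCommGroup H] : (Γ × Γ) →* AddAut (Γ →₀ H) where
  toFun p := (Finsupp.domCongr (lrEquiv p) : (Γ →₀ H) ≃+ (Γ →₀ H))
  map_one' := by
    ext x k
    show x ((lrEquiv 1).symm k) = x k
    congr 1
    simp [lrEquiv] <;> rfl
  map_mul' p q := by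
    ext x k
    show x ((lrEquiv (p * q)).symm k) = x ((lrEquiv q).symm ((lrEquiv p).symm k))
    congr 1
    simp only [lrEquiv, Prod.fst_mul, Prod.snd_mul, Equiv.symm_trans_apply,
      Equiv.mulLeft_symm, Equiv.mulRight_symm, Equiv.coe_mulLeft, Equiv.coe_mulRight, inv_inv]
    group

/-- The same action, as an action on the multiplicative version of `H^(Γ)`. -/
def lrMulAut (Γ H : Type*) [Group Γ] [AddCommGroup H] :
    (Γ × Γ) →* MulAut (Multiplicative (Γ →₀ H)) where
  toFun p := AddEquiv.toMultiplicative (lrAddAut Γ H p)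
  map_one' := by
    have h : lrAddAut Γ H 1 = 1 := map_one _
    ext x : 1
    show AddEquiv.toMultiplicative (lrAddAut Γ H 1) x = x
    rw [h]
    rfl
  map_mul' p q := by
    have h : lrAddAut Γ H (p * q) = lrAddAut Γ H p * lrAddAut Γ H q := map_mul _ _ _
    ext x : 1
    show AddEquiv.toMultiplicative (lrAddAut Γ H (p * q)) x =
      (AddEquiv.toMultiplicative (lrAddAut Γ H p) * AddEquiv.toMultiplicative (lrAddAut Γ H q)) x
    rw [h]
    rfl

/-- The left-right wreath product `H^(Γ) ⋊ (Γ × Γ)`. -/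
abbrev LRWreath (Γ H : Type*) [Group Γ] [AddCommGroup H] :=
  SemidirectProduct (Multiplicative (Γ →₀ H)) (Γ × Γ) (lrMulAut Γ H)

/-- The homomorphism `p : H^(Γ) → H` summing all coordinates. -/
def coordSum (Γ H : Type*) [Group Γ] [AddCommGroup H] : (Γ →₀ H) →+ H :=
  Finsupp.liftAddHom fun _ : Γ => AddMonoidHom.id H

end

/-!
Write `x = (a, (g, h))` with `(g, h) ≠ 1` and let `σ k = g k h⁻¹`. Because `Γ` is infinite and
centreless, `σ` moves infinitely many points: its fixed set `{k | g k = k h}` is empty or a left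
coset of the proper subgroup `C(h)`. Conjugating `x` by `z_m = c δ_m - c δ_1 ∈ 𝓗₀` (with `c ≠ 0`)
turns its base coordinate into `a + z_m - σ · z_m`, which takes the value `c` at every moved point
`m ∉ supp a ∪ {1, σ 1}`. Finitely many conjugates would have finitely many supports, and these
cover all such `m`.
-/

open scoped Pointwise

section CosetComplement

variable {G : Type*} [Group G]

theorem Subgroup.infinite_compl_smul_coe [Infinite G] {C : Subgroup G} (hC : C ≠ ⊤) (a : G) :
    (a • (C : Set G))ᶜ.Infinite := by
  obtain ⟨t, ht⟩ : ∃ t, t ∉ C := by simpa [Subgroup.eq_top_iff'] using hC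
  rcases (C : Set G).finite_or_infinite with hfin | hinf
  · exact hfin.smul_set.infinite_compl
  · refine (hinf.smul_set (a := a * t)).mono ?_
    rintro _ ⟨c, hc, rfl⟩ ⟨c', hc', hcc'⟩
    have : t = c' * c⁻¹ := by
      simp only [smul_eq_mul, mul_assoc] at hcc'
      rw [eq_mul_inv_iff_mul_eq, mul_left_cancel hcc']
    exact ht (this ▸ C.mul_mem hc' (C.inv_mem hc))

theorem setOf_mul_eq_mul_eq_smul_centralizer {g h k₀ : G} (hk₀ : g * k₀ = k₀ * h) :
    {k | g * k = k * h} = k₀ • (Subgroup.centralizer {h} : Set G) := by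
  ext k
  obtain rfl : g = k₀ * h * k₀⁻¹ := eq_mul_inv_of_mul_eq hk₀
  rw [Set.mem_smul_set_iff_inv_smul_mem, smul_eq_mul, SetLike.mem_coe,
    Subgroup.mem_centralizer_singleton_iff, Set.mem_ofPred_eq, ← mul_right_inj k₀⁻¹]
  simp only [mul_assoc, inv_mul_cancel_left]
  exact eq_comm

theorem infinite_setOf_mul_mul_inv_ne [Infinite G] (hZ : Subgroup.center G = ⊥) {g h : G}
    (hgh : (g, h) ≠ 1) : {k | g * k * h⁻¹ ≠ k}.Infinite := by
  have hcompl : {k | g * k * h⁻¹ ≠ k} = {k | g * k = k * h}ᶜ := by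
    ext k
    exact mul_inv_eq_iff_eq_mul.not
  rcases Set.eq_empty_or_nonempty {k | g * k = k * h} with hempty | ⟨k₀, hk₀⟩
  · rw [hcompl, hempty, Set.compl_empty]
    exact Set.infinite_univ
  have hh : h ≠ 1 := by
    rintro rfl
    rw [Set.mem_ofPred_eq, mul_one, mul_eq_right] at hk₀
    exact hgh (Prod.ext hk₀ rfl)
  have hcentralizer : Subgroup.centralizer {h} ≠ ⊤ := by
    rw [Ne, Subgroup.centralizer_eq_top_iff_subset, Set.singleton_subset_iff, hZ]
    exact hh
  rw [hcompl, setOf_mul_eq_mul_eq_smul_centralizer hk₀]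
  exact Subgroup.infinite_compl_smul_coe hcentralizer k₀

end CosetComplement

open SemidirectProduct Multiplicative

namespace LRWreath

variable {Γ H : Type*} [Group Γ] [AddCommGroup H]

theorem lrEquiv_apply (p : Γ × Γ) (k : Γ) : lrEquiv p k = p.1 * k * p.2⁻¹ := by
  simp [lrEquiv, mul_assoc]

theorem lrAddAut_single (p : Γ × Γ) (a : Γ) (c : H) :
    lrAddAut Γ H p (Finsupp.single a c) = Finsupp.single (lrEquiv p a) c :=
  Finsupp.equivMapDomain_single _ _ _

theorem toAdd_left_inl_mul_mul_inl_inv (w : Γ →₀ H) (x : LRWreath Γ H) :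
    toAdd (inl (ofAdd w) * x * (inl (ofAdd w))⁻¹).left =
      w + toAdd x.left - lrAddAut Γ H x.right w := by
  rw [← map_inv]
  simp only [mul_left, mul_right, left_inl, right_inl, one_mul, map_one, MulAut.one_apply]
  rw [map_inv, sub_eq_add_neg]
  rfl

theorem toAdd_left_inl_mul_mul_inl_inv_apply (x : LRWreath Γ H) (c : H) {m : Γ}
    (hmoved : lrEquiv x.right m ≠ m) (hm1 : m ≠ 1) (hm1' : m ≠ lrEquiv x.right 1)
    (hxm : (toAdd x.left : Γ →₀ H) m = 0) :
    (toAdd (inl (ofAdd (Finsupp.single m c - Finsupp.single 1 c)) * x *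
      (inl (ofAdd (Finsupp.single m c - Finsupp.single 1 c)))⁻¹).left : Γ →₀ H) m = c := by
  rw [toAdd_left_inl_mul_mul_inl_inv, map_sub, lrAddAut_single, lrAddAut_single]
  simp [hxm, hmoved, hm1.symm, hm1'.symm]

end LRWreath

open LRWreath

/-- if `Γ` is an infinite group with trivial center, `H` a nontrivial abelian
group, `𝓖 = H^(Γ) ⋊ (Γ × Γ)` the left-right wreath product and `𝓗₀` the kernel of the
coordinate-sum homomorphism `p : H^(Γ) → H`, then every `x ∈ 𝓖` with `x ∉ 𝓗 = H^(Γ)` has an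
infinite `𝓗₀`-conjugation orbit. -/
theorem stmt_1 {Γ H : Type*} [Group Γ] [Infinite Γ] [AddCommGroup H] [Nontrivial H]
    (hZ : Subgroup.center Γ = ⊥)
    (x : LRWreath Γ H)
    (hx : x ∉ (SemidirectProduct.inl :
      Multiplicative (Γ →₀ H) →* LRWreath Γ H).range) :
    {y : LRWreath Γ H | ∃ z : Γ →₀ H, coordSum Γ H z = 0 ∧
        y = SemidirectProduct.inl (Multiplicative.ofAdd z) * x *
            (SemidirectProduct.inl (Multiplicative.ofAdd z))⁻¹}.Infinite := by
  set σ := lrEquiv x.right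
  set S := {y : LRWreath Γ H | ∃ z : Γ →₀ H, coordSum Γ H z = 0 ∧
    y = SemidirectProduct.inl (Multiplicative.ofAdd z) * x *
      (SemidirectProduct.inl (Multiplicative.ofAdd z))⁻¹}
  have hright : x.right ≠ 1 := by rwa [range_inl_eq_ker_rightHom] at hx
  have hmoved : {k | σ k ≠ k}.Infinite := by
    simpa only [σ, lrEquiv_apply] using infinite_setOf_mul_mul_inv_ne hZ hright
  obtain ⟨c, hc⟩ := exists_ne (0 : H)
  have hcover : {k | σ k ≠ k} \ (↑(toAdd x.left).support ∪ {1, σ 1}) ⊆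
      ⋃ y ∈ S, ↑(toAdd y.left).support := by
    rintro m ⟨hm, hm'⟩
    simp only [Set.mem_union, Finset.mem_coe, Finsupp.mem_support_iff, Set.mem_insert_iff,
      Set.mem_singleton_iff, not_or, not_not] at hm'
    refine Set.mem_biUnion ⟨Finsupp.single m c - Finsupp.single 1 c, ?_, rfl⟩ ?_
    · simp only [coordSum, map_sub, Finsupp.liftAddHom_apply_single, AddMonoidHom.id_apply,
        sub_self]
    · rw [Finset.mem_coe, Finsupp.mem_support_iff,
        toAdd_left_inl_mul_mul_inl_inv_apply x c hm hm'.2.1 hm'.2.2 hm'.1]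
      exact hc
  intro hS
  refine (hmoved.sdiff ?_).mono hcover (hS.biUnion fun y _ => Finset.finite_toSet _)
  exact (Finset.finite_toSet _).union (Set.toFinite _)
end

section
/- Let Γ be an infinite group with trivial center. Then every element of the wreath product base H^(Γ) other than the identity has an infinite orbit under conjugation by elements of Γ × {e} ⊂ Γ × Γ, i.e. for x ∈ H^(Γ), x ≠ 0, the set {(g,e)·x | g ∈ Γ} is infinite. -/
/-!
Fix `k₀` in the support of `x`. The translate of `x` by `g` has `g * k₀` in its (finite)
support, so each translate comes from only finitely many `g`; as `Γ` is infinite, there are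
infinitely many translates.
-/

namespace Finsupp

variable {G M : Type*} [Group G] [Zero M]

lemma mul_mem_support_equivMapDomain_mulLeft {x : G →₀ M} {k : G} (hk : k ∈ x.support)
    (g : G) : g * k ∈ (equivMapDomain (Equiv.mulLeft g) x).support := by
  simpa [equivMapDomain_apply] using hk

lemma finite_setOf_equivMapDomain_mulLeft_eq {x : G →₀ M} (hx : x ≠ 0) (y : G →₀ M) :
    {g : G | equivMapDomain (Equiv.mulLeft g) x = y}.Finite := by
  obtain ⟨k, hk⟩ := support_nonempty_iff.mpr hx
  refine (y.support.finite_toSet.preimage (mul_left_injective k).injOn).subset ?_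
  rintro g rfl
  exact mul_mem_support_equivMapDomain_mulLeft hk g

lemma infinite_range_equivMapDomain_mulLeft [Infinite G] {x : G →₀ M} (hx : x ≠ 0) :
    (Set.range fun g : G => equivMapDomain (Equiv.mulLeft g) x).Infinite := by
  intro hfin
  have hfib := hfin.preimage' fun y _ => finite_setOf_equivMapDomain_mulLeft_eq hx y
  rw [Set.preimage_range] at hfib
  exact Set.infinite_univ hfib

end Finsupp

theorem stmt_4_general {Γ H : Type*} [Group Γ] [Infinite Γ] [AddGroup H]
    (x : Γ →₀ H) (hx : x ≠ 0) :
    {y : Γ →₀ H | ∃ g : Γ, ∀ k : Γ, y k = x (g⁻¹ * k)}.Infinite := by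
  refine (Finsupp.infinite_range_equivMapDomain_mulLeft hx).mono ?_
  rintro _ ⟨g, rfl⟩
  exact ⟨g, fun k => rfl⟩

/-- if `Γ` is an infinite group with trivial center and `H` is a nontrivial
group, then every nonzero element `x` of the wreath product base `H^(Γ)` has an infinite
orbit under conjugation by `Γ × {e} ⊆ Γ × Γ`, i.e. the set of translates
`(g,e)·x`, given by `((g,e)·x)_k = x_{g⁻¹ k}`, is infinite. -/
theorem stmt_4 {Γ H : Type*} [Group Γ] [Infinite Γ] [AddGroup H] [Nontrivial H]
    (hZ : Subgroup.center Γ = ⊥)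
    (x : Γ →₀ H) (hx : x ≠ 0) :
    {y : Γ →₀ H | ∃ g : Γ, ∀ k : Γ, y k = x (g⁻¹ * k)}.Infinite :=
  stmt_4_general x hx
end

section
/- Let G and 𝓖 be countable groups and γ₁, γ₂ : G → 𝓖 group homomorphisms. Assume that for every h ∈ 𝓖 with h ≠ e, the set {γ₁(g) h γ₁(g)⁻¹ | g ∈ G} is infinite. If there exists a finite subset F ⊂ 𝓖 such that F ∩ γ₁(g) F γ₂(g)⁻¹ ≠ ∅ for all g ∈ G, then there exists an h ∈ 𝓖 with γ₁(g) = h γ₂(g) h⁻¹ for all g ∈ G. -/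
/-!
Let `G` act on `G'` by `g • f = γ₁ g * f * (γ₂ g)⁻¹`; the stabilizer of `f` is the subgroup
where `γ₁` agrees with `γ₂` conjugated by `f`. The hypothesis on `F` says that `G` is covered by
finitely many left cosets of such stabilizers, so by B. H. Neumann's lemma one of them, for some
`c ∈ F`, has finite index. On a finite-index normal subgroup `N` inside it, `γ₁` and
`ψ = Ad c ∘ γ₂` agree, so for every `g` the element `(ψ g)⁻¹ * γ₁ g` commutes with `γ₁ N`. Its
`γ₁(G)`-conjugacy orbit is then finite, hence it is trivial, i.e. `γ₁ = ψ`.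
-/

open scoped Pointwise

namespace MonoidHom

variable {G G' : Type*} [Group G] [Group G']

theorem inv_mul_mem_eqLocus_conj_comp {γ₁ γ₂ : G →* G'} {x y : G} {f : G'}
    (h : γ₁ x * f * (γ₂ x)⁻¹ = γ₁ y * f * (γ₂ y)⁻¹) :
    y⁻¹ * x ∈ γ₁.eqLocus ((MulAut.conj f).toMonoidHom.comp γ₂) := by
  show γ₁ (y⁻¹ * x) = f * γ₂ (y⁻¹ * x) * f⁻¹
  rw [map_mul, map_inv, map_mul, map_inv, inv_mul_eq_iff_eq_mul]
  calc γ₁ x = γ₁ x * f * (γ₂ x)⁻¹ * (γ₂ x * f⁻¹) := by group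
    _ = γ₁ y * (f * ((γ₂ y)⁻¹ * γ₂ x) * f⁻¹) := by rw [h]; group

theorem exists_finiteIndex_eqLocus_conj_comp (γ₁ γ₂ : G →* G') (F : Finset G')
    (hF : ∀ g : G, ∃ f₁ ∈ F, ∃ f₂ ∈ F, f₁ = γ₁ g * f₂ * (γ₂ g)⁻¹) :
    ∃ c ∈ F, (γ₁.eqLocus ((MulAut.conj c).toMonoidHom.comp γ₂)).FiniteIndex := by
  let w : G' × G' → G := fun p => Classical.epsilon fun x => p.1 = γ₁ x * p.2 * (γ₂ x)⁻¹
  have hcover : ⋃ p ∈ F ×ˢ F,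
      w p • (γ₁.eqLocus ((MulAut.conj p.2).toMonoidHom.comp γ₂) : Set G) = Set.univ := by
    refine Set.eq_univ_of_forall fun x => ?_
    obtain ⟨f₁, hf₁, f₂, hf₂, hx⟩ := hF x
    have hw : f₁ = γ₁ (w (f₁, f₂)) * f₂ * (γ₂ (w (f₁, f₂)))⁻¹ :=
      Classical.epsilon_spec (p := fun x => f₁ = γ₁ x * f₂ * (γ₂ x)⁻¹) ⟨x, hx⟩
    refine Set.mem_biUnion (x := (f₁, f₂)) (Finset.mem_product.2 ⟨hf₁, hf₂⟩) ?_
    exact Set.mem_smul_set_iff_inv_smul_mem.2 (inv_mul_mem_eqLocus_conj_comp (hx.symm.trans hw))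
  obtain ⟨p, hp, hfi⟩ := Subgroup.exists_finiteIndex_of_leftCoset_cover hcover
  exact ⟨p.2, (Finset.mem_product.1 hp).2, hfi⟩

theorem commute_inv_mul_of_mem_eqLocus (φ ψ : G →* G') {g k : G} (hk : k ∈ φ.eqLocus ψ)
    (hgk : g * k * g⁻¹ ∈ φ.eqLocus ψ) : Commute (φ k) ((ψ g)⁻¹ * φ g) := by
  have hk : φ k = ψ k := hk
  have hgk : φ (g * k * g⁻¹) = ψ (g * k * g⁻¹) := hgk
  rw [map_mul, map_mul, map_inv, map_mul, map_mul, map_inv, ← hk] at hgk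
  calc φ k * ((ψ g)⁻¹ * φ g) = (ψ g)⁻¹ * (ψ g * φ k * (ψ g)⁻¹) * φ g := by group
    _ = (ψ g)⁻¹ * φ g * φ k := by rw [← hgk]; group

theorem finite_conj_orbit_of_forall_commute (φ : G →* G') (u : G') (H : Subgroup G)
    [H.FiniteIndex] (hH : ∀ k ∈ H, Commute (φ k) u) :
    {x : G' | ∃ g : G, x = φ g * u * (φ g)⁻¹}.Finite := by
  refine (Set.finite_range fun q : G ⧸ H => φ q.out * u * (φ q.out)⁻¹).subset ?_
  rintro _ ⟨g, rfl⟩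
  obtain ⟨⟨k, hk⟩, hout⟩ := QuotientGroup.mk_out_eq_mul H g
  refine ⟨g, ?_⟩
  simp only [hout, map_mul, mul_inv_rev, mul_assoc, (hH k hk).eq, mul_inv_cancel_left]

theorem eq_of_finiteIndex_eqLocus (φ ψ : G →* G')
    (horb : ∀ u : G', u ≠ 1 → {x : G' | ∃ g : G, x = φ g * u * (φ g)⁻¹}.Infinite)
    [(φ.eqLocus ψ).FiniteIndex] : φ = ψ := by
  ext g
  set N := (φ.eqLocus ψ).normalCore
  have hcomm : ∀ k ∈ N, Commute (φ k) ((ψ g)⁻¹ * φ g) := fun k hk =>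
    commute_inv_mul_of_mem_eqLocus φ ψ (Subgroup.normalCore_le _ hk)
      (Subgroup.normalCore_le _ (Subgroup.normalCore_normal _ |>.conj_mem k hk g))
  by_contra hne
  exact horb _ (mt inv_mul_eq_one.1 (Ne.symm hne))
    (finite_conj_orbit_of_forall_commute φ _ N hcomm)

end MonoidHom

theorem stmt_5_general {G G' : Type*} [Group G] [Group G']
    (γ₁ γ₂ : G →* G')
    (horb : ∀ h : G', h ≠ 1 → {x : G' | ∃ g : G, x = γ₁ g * h * (γ₁ g)⁻¹}.Infinite)
    (F : Finset G')
    (hF : ∀ g : G, ∃ f₁ ∈ F, ∃ f₂ ∈ F, f₁ = γ₁ g * f₂ * (γ₂ g)⁻¹) :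
    ∃ h : G', ∀ g : G, γ₁ g = h * γ₂ g * h⁻¹ := by
  obtain ⟨c, -, hc⟩ := MonoidHom.exists_finiteIndex_eqLocus_conj_comp γ₁ γ₂ F hF
  have hconj :=
    MonoidHom.eq_of_finiteIndex_eqLocus γ₁ ((MulAut.conj c).toMonoidHom.comp γ₂) horb
  exact ⟨c, fun g => DFunLike.congr_fun hconj g⟩

/-- let `G`, `G'` be countable groups and `γ₁ γ₂ : G → G'` homomorphisms such
that every nontrivial element of `G'` has infinite orbit under conjugation by the image of
`γ₁`. If some finite subset `F ⊆ G'` satisfies `F ∩ γ₁(g) F γ₂(g)⁻¹ ≠ ∅` for all `g ∈ G`,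
then `γ₁ = (Ad h) ∘ γ₂` for some `h ∈ G'`. -/
theorem stmt_5 {G G' : Type*} [Group G] [Group G'] [Countable G] [Countable G']
    (γ₁ γ₂ : G →* G')
    (horb : ∀ h : G', h ≠ 1 → {x : G' | ∃ g : G, x = γ₁ g * h * (γ₁ g)⁻¹}.Infinite)
    (F : Finset G')
    (hF : ∀ g : G, ∃ f₁ ∈ F, ∃ f₂ ∈ F, f₁ = γ₁ g * f₂ * (γ₂ g)⁻¹) :
    ∃ h : G', ∀ g : G, γ₁ g = h * γ₂ g * h⁻¹ :=
  stmt_5_general γ₁ γ₂ horb F hF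
end

section
/- Let a countable group Γ act on a countable set I. If every orbit Γ·i is infinite, then for every finite subset F ⊂ I there exists g ∈ Γ with g·F ∩ F = ∅. -/
/-!
If every `g` sent some point of `F` into `G`, then `Γ` would be the union of the finitely many
sets `{g | g • i = j}` with `i ∈ F`, `j ∈ G`; each nonempty one is a left coset of the stabilizer
of `i`. By B. H. Neumann's lemma one of these stabilizers has finite index, i.e. some orbit
through `F` is finite.
-/

open scoped Pointwise

namespace MulAction

variable {Γ I : Type*} [Group Γ] [MulAction Γ I]

theorem finite_orbit_of_finiteIndex_stabilizer {i : I} (h : (stabilizer Γ i).FiniteIndex) :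
    (orbit Γ i).Finite :=
  Set.finite_of_ncard_ne_zero (index_stabilizer Γ i ▸ h.index_ne_zero)

theorem smul_stabilizer_eq_setOf_smul_eq {g₀ : Γ} {i j : I} (h : g₀ • i = j) :
    g₀ • (stabilizer Γ i : Set Γ) = {g | g • i = j} := by
  ext g
  rw [mem_leftCoset_iff, SetLike.mem_coe, mem_stabilizer_iff, mul_smul, inv_smul_eq_iff, h]
  rfl

theorem exists_smul_notMem_of_infinite_orbit (F G : Finset I)
    (hF : ∀ i ∈ F, (orbit Γ i).Infinite) : ∃ g : Γ, ∀ i ∈ F, g • i ∉ G := by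
  classical
  by_contra! h
  set s := (F ×ˢ G).filter fun p => p.2 ∈ orbit Γ p.1
  have hrep : ∀ p ∈ s, ∃ g : Γ, g • p.1 = p.2 := fun p hp => (Finset.mem_filter.mp hp).2
  choose! rep hrep using hrep
  have hcover : ⋃ p ∈ s, rep p • (stabilizer Γ p.1 : Set Γ) = Set.univ := by
    refine Set.eq_univ_of_forall fun g => ?_
    obtain ⟨i, hiF, hgi⟩ := h g
    have hp : (i, g • i) ∈ s := Finset.mem_filter.mpr ⟨Finset.mem_product.mpr ⟨hiF, hgi⟩, g, rfl⟩
    refine Set.mem_biUnion hp ?_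
    rw [smul_stabilizer_eq_setOf_smul_eq (hrep _ hp)]
    rfl
  obtain ⟨p, hp, hindex⟩ := Subgroup.exists_finiteIndex_of_leftCoset_cover hcover
  have hpF : p.1 ∈ F := (Finset.mem_product.mp (Finset.mem_filter.mp hp).1).1
  exact hF p.1 hpF (finite_orbit_of_finiteIndex_stabilizer hindex)

end MulAction

theorem stmt_6_general {Γ I : Type*} [Group Γ] [MulAction Γ I]
    (horb : ∀ i : I, (MulAction.orbit Γ i).Infinite) (F : Finset I) :
    ∃ g : Γ, ∀ i ∈ F, g • i ∉ F :=
  MulAction.exists_smul_notMem_of_infinite_orbit F F fun i _ => horb i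

/-- if a countable group `Γ` acts on a countable set `I` with all orbits
infinite, then every finite subset `F ⊆ I` can be moved completely off itself:
there is `g ∈ Γ` with `g·F ∩ F = ∅`. -/
theorem stmt_6 {Γ I : Type*} [Group Γ] [Countable Γ] [Countable I] [MulAction Γ I]
    (horb : ∀ i : I, (MulAction.orbit Γ i).Infinite) (F : Finset I) :
    ∃ g : Γ, ∀ i ∈ F, g • i ∉ F :=
  stmt_6_general horb F
end

section
/- Let Γ be a group in which every finite subgroup has order at most κ−1 for some fixed integer κ, and assume that the centralizer in Γ of every infinite subgroup is amenable. Let G = Γ × Γ act on Γ by left–right multiplication. Then for every subset F ⊂ Γ with |F| ≥ κ, the pointwise stabilizer Stab F ⊂ G is an amenable group. -/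
/-- A discrete group is amenable if it carries a left-invariant, finitely additive
probability measure defined on all subsets. -/
def IsAmenableGroup (G : Type*) [Group G] : Prop :=
  ∃ m : Set G → ℝ,
    m Set.univ = 1 ∧
    (∀ A : Set G, 0 ≤ m A) ∧
    (∀ A B : Set G, Disjoint A B → m (A ∪ B) = m A + m B) ∧
    (∀ (g : G) (A : Set G), m ((g * ·) '' A) = m A)

/-!
Fix `k₀ ∈ F`. If `(g, h)` fixes every `k ∈ F`, then `h = k₀⁻¹ g k₀` and `g` commutes with every
`k k₀⁻¹`, so `(g, h) ↦ g` embeds `Stab F` into the centralizer of the subgroup generated by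
`F k₀⁻¹`. That subgroup has at least `κ` elements, hence is infinite, so its centralizer is
amenable; and amenability passes to subgroups by pushing the invariant mean forward along the
projection onto a subgroup given by a choice of right coset representatives.
-/

namespace IsAmenableGroup

variable {G H : Type*} [Group G] [Group H]

theorem of_equivariant (φ : H →* G) (f : G → H) (hf : ∀ h g, f (φ h * g) = h * f g)
    (hG : IsAmenableGroup G) : IsAmenableGroup H := by
  obtain ⟨m, hm_univ, hm_nonneg, hm_add, hm_inv⟩ := hG
  refine ⟨fun A => m (f ⁻¹' A), hm_univ, fun A => hm_nonneg _, fun A B hAB => ?_, fun h A => ?_⟩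
  · exact hm_add _ _ (hAB.preimage f)
  · have : f ⁻¹' ((h * ·) '' A) = (φ h * ·) '' (f ⁻¹' A) := by
      simp only [Set.image_mul_left, ← Set.preimage_comp]
      congr 1
      funext g
      simp only [Function.comp_apply, ← map_inv, hf]
    simp only [this, hm_inv]

theorem of_injective (φ : H →* G) (hφ : Function.Injective φ) (hG : IsAmenableGroup G) :
    IsAmenableGroup H := by
  obtain ⟨T, hT, -⟩ := Subgroup.exists_isComplement_right φ.range 1
  let e := MonoidHom.ofInjective hφ
  refine of_equivariant φ (fun g => e.symm (hT.equiv g).1) (fun h g => ?_) hG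
  have he : (⟨φ h, ⟨h, rfl⟩⟩ : φ.range) = e h := rfl
  rw [hT.equiv_mul_left_of_mem ⟨h, rfl⟩, he, map_mul, e.symm_apply_apply]

end IsAmenableGroup

section Stabilizer

variable {Γ : Type*} [Group Γ] {g h k k₀ : Γ}

theorem eq_inv_mul_mul_of_mul_mul_inv_eq (hk : g * k * h⁻¹ = k) : h = k⁻¹ * g * k := by
  rw [mul_assoc, mul_inv_eq_iff_eq_mul.mp hk, inv_mul_cancel_left]

theorem commute_mul_inv_of_mul_mul_inv_eq (hk : g * k * h⁻¹ = k) (hk₀ : g * k₀ * h⁻¹ = k₀) :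
    Commute g (k * k₀⁻¹) := by
  show g * (k * k₀⁻¹) = k * k₀⁻¹ * g
  rw [← mul_assoc, mul_inv_eq_iff_eq_mul.mp hk, eq_inv_mul_mul_of_mul_mul_inv_eq hk₀]
  group

variable {F : Set Γ}

theorem mem_centralizer_closure_of_forall_mul_mul_inv_eq (hF : ∀ k ∈ F, g * k * h⁻¹ = k)
    (hk₀ : k₀ ∈ F) : g ∈ Subgroup.centralizer (Subgroup.closure ((· * k₀⁻¹) '' F) : Set Γ) := by
  rw [Subgroup.centralizer_closure, Subgroup.mem_centralizer_iff]
  rintro _ ⟨k, hk, rfl⟩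
  exact (commute_mul_inv_of_mul_mul_inv_eq (hF k hk) (hF k₀ hk₀)).symm

theorem IsAmenableGroup.of_forall_mul_mul_inv_eq {S : Subgroup (Γ × Γ)}
    (hS : ∀ p ∈ S, ∀ k ∈ F, p.1 * k * p.2⁻¹ = k) (hk₀ : k₀ ∈ F)
    (hC : IsAmenableGroup
      (Subgroup.centralizer (Subgroup.closure ((· * k₀⁻¹) '' F) : Set Γ))) :
    IsAmenableGroup S := by
  let φ := ((MonoidHom.fst Γ Γ).comp S.subtype).codRestrict _
    fun p => mem_centralizer_closure_of_forall_mul_mul_inv_eq (hS p p.2) hk₀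
  refine IsAmenableGroup.of_injective φ (fun p q hpq => ?_) hC
  have hfst : (p : Γ × Γ).1 = (q : Γ × Γ).1 := congrArg Subtype.val hpq
  have hsnd : (p : Γ × Γ).2 = (q : Γ × Γ).2 := by
    rw [eq_inv_mul_mul_of_mul_mul_inv_eq (hS p p.2 k₀ hk₀),
      eq_inv_mul_mul_of_mul_mul_inv_eq (hS q q.2 k₀ hk₀), hfst]
  exact Subtype.ext (Prod.ext hfst hsnd)

end Stabilizer

theorem Subgroup.infinite_of_le_encard {Γ : Type*} [Group Γ] {κ : ℕ} (hκ : 0 < κ)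
    (hfin : ∀ S : Subgroup Γ, (S : Set Γ).Finite → (S : Set Γ).encard ≤ (κ - 1 : ℕ))
    {K : Subgroup Γ} (hK : (κ : ℕ∞) ≤ (K : Set Γ).encard) : Infinite K := by
  refine Set.infinite_coe_iff.mpr fun hK_fin => ?_
  have := hK.trans (hfin K hK_fin)
  norm_cast at this
  omega

theorem stmt_8_general {Γ : Type*} [Group Γ] (κ : ℕ) (hκ : 0 < κ)
    (hfin : ∀ S : Subgroup Γ, (S : Set Γ).Finite → (S : Set Γ).encard ≤ (κ - 1 : ℕ))
    (hcent : ∀ S : Subgroup Γ, Infinite S →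
      IsAmenableGroup (Subgroup.centralizer (S : Set Γ)))
    (F : Set Γ) (hF : (κ : ℕ∞) ≤ F.encard)
    (S : Subgroup (Γ × Γ))
    (hS : ∀ p : Γ × Γ, p ∈ S ↔ ∀ k ∈ F, p.1 * k * p.2⁻¹ = k) :
    IsAmenableGroup S := by
  obtain ⟨k₀, hk₀⟩ : F.Nonempty :=
    Set.nonempty_of_encard_ne_zero (ne_of_gt (lt_of_lt_of_le (by exact_mod_cast hκ) hF))
  set D := (· * k₀⁻¹) '' F
  have hD : (κ : ℕ∞) ≤ (Subgroup.closure D : Set Γ).encard :=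
    calc (κ : ℕ∞) ≤ F.encard := hF
      _ = D.encard := ((mul_left_injective k₀⁻¹).encard_image F).symm
      _ ≤ _ := Set.encard_mono Subgroup.subset_closure
  exact IsAmenableGroup.of_forall_mul_mul_inv_eq (fun p hp => (hS p).mp hp) hk₀
    (hcent _ (Subgroup.infinite_of_le_encard hκ hfin hD))

/-- let `Γ` be a countable group in which every finite subgroup has order at
most `κ - 1`, and in which the centralizer of every infinite subgroup is amenable. Let
`G = Γ × Γ` act on `Γ` by left-right multiplication. Then for every subset `F ⊆ Γ` with
`|F| ≥ κ`, the pointwise stabilizer `Stab F` is an amenable group. -/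
theorem stmt_8 {Γ : Type*} [Group Γ] [Countable Γ] (κ : ℕ) (hκ : 0 < κ)
    (hfin : ∀ S : Subgroup Γ, (S : Set Γ).Finite → (S : Set Γ).encard ≤ (κ - 1 : ℕ))
    (hcent : ∀ S : Subgroup Γ, Infinite S →
      IsAmenableGroup (Subgroup.centralizer (S : Set Γ)))
    (F : Set Γ) (hF : (κ : ℕ∞) ≤ F.encard)
    (S : Subgroup (Γ × Γ))
    (hS : ∀ p : Γ × Γ, p ∈ S ↔ ∀ k ∈ F, p.1 * k * p.2⁻¹ = k) :
    IsAmenableGroup S :=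
  stmt_8_general κ hκ hfin hcent F hF S hS
end

section
/- In the group Γ × S_∞, where S_∞ is the group of finitely supported permutations of ℕ and Γ is any group, there exist sequences (g_n) and (h_n) of elements such that g_n and h_n do not commute for any n, but for every fixed element x of the group, g_n commutes with x and h_n commutes with x for all sufficiently large n. -/
/-!
Take `g n = (1, (n n+1))` and `h n = (1, (n+1 n+2))`: overlapping transpositions never commute,
while a finitary permutation fixes every large point and therefore commutes with all
transpositions of large points; the `Γ`-coordinate is `1`, which is central.
-/

/-- The group `S_∞` of finitely supported permutations of `ℕ`, as a subgroup of
`Equiv.Perm ℕ`. -/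
def finitaryPerms : Subgroup (Equiv.Perm ℕ) where
  carrier := {σ : Equiv.Perm ℕ | {n : ℕ | σ n ≠ n}.Finite}
  one_mem' := by simp
  mul_mem' := by
    intro σ τ hσ hτ
    refine (hσ.union hτ).subset ?_
    intro n hn
    by_contra hc
    simp only [Set.mem_union, Set.mem_setOf_eq, not_or, not_not] at hc
    apply hn
    show σ (τ n) = n
    rw [hc.2, hc.1]
  inv_mem' := by
    intro σ hσ
    refine (hσ.image σ.symm).subset ?_
    intro n hn
    refine ⟨σ n, ?_, σ.symm_apply_apply n⟩
    show σ (σ n) ≠ σ n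
    intro hcon
    have h1 : σ n = n := σ.injective hcon
    apply hn
    show σ⁻¹ n = n
    calc σ⁻¹ n = σ⁻¹ (σ n) := by rw [h1]
    _ = n := by simp

open Equiv Filter

lemma swap_mem_finitaryPerms (a b : ℕ) : swap a b ∈ finitaryPerms := by
  apply ((Set.finite_singleton b).insert a).subset
  intro n hn
  by_contra hc
  simp only [Set.mem_insert_iff, Set.mem_singleton_iff, not_or] at hc
  exact hn (swap_apply_of_ne_of_ne hc.1 hc.2)

lemma eventually_apply_eq_of_mem_finitaryPerms {σ : Perm ℕ} (hσ : σ ∈ finitaryPerms) :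
    ∀ᶠ n in atTop, σ n = n := by
  rw [← Nat.cofinite_eq_atTop]
  exact hσ.eventually_cofinite_notMem.mono fun _ hn => not_not.mp hn

lemma Equiv.commute_swap_of_apply_eq {α : Type*} [DecidableEq α] {σ : Perm α} {a b : α}
    (ha : σ a = a) (hb : σ b = b) : Commute (swap a b) σ := by
  rw [commute_iff_eq, mul_swap_eq_swap_mul, ha, hb]

lemma Equiv.swap_mul_swap_ne_swap_mul_swap {α : Type*} [DecidableEq α] {a b c : α}
    (hab : a ≠ b) (hac : a ≠ c) (hbc : b ≠ c) :
    swap a b * swap b c ≠ swap b c * swap a b := by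
  intro h
  have := congr($h a)
  simp only [Perm.mul_apply, swap_apply_of_ne_of_ne hab hac, swap_apply_left] at this
  exact hbc this

def adjSwap (Γ : Type*) [Group Γ] (n : ℕ) : Γ × finitaryPerms :=
  (1, ⟨swap n (n + 1), swap_mem_finitaryPerms _ _⟩)

lemma not_commute_adjSwap_succ {Γ : Type*} [Group Γ] (n : ℕ) :
    ¬Commute (adjSwap Γ n) (adjSwap Γ (n + 1)) := fun h =>
  swap_mul_swap_ne_swap_mul_swap (by omega) (by omega) (by omega) congr(($h.eq).2.1)

lemma eventually_commute_adjSwap {Γ : Type*} [Group Γ] (x : Γ × finitaryPerms) :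
    ∀ᶠ n in atTop, Commute (adjSwap Γ n) x := by
  have hfix := eventually_apply_eq_of_mem_finitaryPerms x.2.2
  filter_upwards [hfix, (tendsto_add_atTop_nat 1).eventually hfix] with n hn hn1
  exact .prod (.one_left _) (Subtype.ext (commute_swap_of_apply_eq hn hn1).eq)

/-- in `Γ × S_∞`, where `S_∞` is the group of finitely supported permutations
of `ℕ` and `Γ` is any group, there are sequences `(g_n)`, `(h_n)` such that `g_n` and `h_n`
never commute, yet both eventually commute with every fixed element of the group. -/
theorem stmt_9 {Γ : Type*} [Group Γ] :
    ∃ g h : ℕ → Γ × finitaryPerms,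
      (∀ n : ℕ, g n * h n ≠ h n * g n) ∧
      (∀ x : Γ × finitaryPerms, ∃ N : ℕ, ∀ n ≥ N,
        g n * x = x * g n ∧ h n * x = x * h n) := by
  refine ⟨adjSwap Γ, fun n => adjSwap Γ (n + 1), not_commute_adjSwap_succ, fun x => ?_⟩
  have hx := eventually_commute_adjSwap (Γ := Γ) x
  exact eventually_atTop.mp (hx.and ((tendsto_add_atTop_nat 1).eventually hx))
end

section
/- Let Σ be a countable abelian group, I a countably infinite set, and suppose we are given: abelian groups H₁ and H₂ with H₁ × H₁ ⊂ H₂; injective homomorphisms π_i : H₁ → Σ for i ∈ I and π_{ij} : H₂ → Σ for distinct i,j ∈ I; an abelian group L with homomorphisms ψ_i : Σ → L and ψ : H₂ → L; and an action of Perm(I) on Σ by automorphisms γ_β; satisfying: (1) the π_{ij}(H₂) generate Σ; (2) the π_i(H₁) are in direct sum position and generate Σ₁; (3) π_{ij}(a,b) = π_i(a) + π_j(b) for (a,b) ∈ H₁ × H₁; (4) ψ_i ∘ π_{ij} = ψ = −ψ_j ∘ π_{ij}; (5) ψ_k ∘ π_{ij} = 0 for k ∉ {i,j}; (6) Σ₁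 = ⋂_i ker ψ_i; (7) γ_β ∘ π_i = π_{β(i)} and γ_β ∘ π_{ij} = π_{β(i),β(j)}. Then there exist an abelian group H with subgroup H₀ and a Perm(I)-equivariant group isomorphism δ : p_H⁻¹(H₀) → Σ (where p_H : H^(I) → H sums coordinates) which intertwines the canonical coordinate embeddings of H₀ and of {(x,y) ∈ H × H : x + y ∈ H₀} with the π_i and π_{ij}, via suitable isomorphisms δ₁ : H₀ → H₁ and δ₂ : (H × H)_{H₀} → H₂. -/
open Finsupp AddSubgroup Equiv


lemma fresh_list {I : Type} [Infinite I] (l : List I) : ∃ x : I, x ∉ l := by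
  classical
  obtain ⟨x, hx⟩ := Infinite.exists_notMem_finset (l.toFinset)
  exact ⟨x, fun h => hx (List.mem_toFinset.2 h)⟩

lemma exists_perm_triple {I : Type} [Infinite I] {i j m i' j' m' : I}
    (h1 : i ≠ j) (h2 : i ≠ m) (h3 : j ≠ m) (h1' : i' ≠ j') (h2' : i' ≠ m') (h3' : j' ≠ m') :
    ∃ β : Equiv.Perm I, β i = i' ∧ β j = j' ∧ β m = m' := by
  classical
  obtain ⟨a, ha⟩ := fresh_list [i, j, m, i', j', m']
  obtain ⟨b, hb⟩ := fresh_list [i, j, m, i', j', m', a]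
  obtain ⟨c, hc⟩ := fresh_list [i, j, m, i', j', m', a, b]
  simp only [List.mem_cons, not_or, List.not_mem_nil] at ha hb hc
  obtain ⟨ha1, ha2, ha3, ha4, ha5, ha6, -⟩ := ha
  obtain ⟨hb1, hb2, hb3, hb4, hb5, hb6, hb7, -⟩ := hb
  obtain ⟨hc1, hc2, hc3, hc4, hc5, hc6, hc7, hc8, -⟩ := hc
  refine ⟨(Equiv.swap a i' * Equiv.swap b j' * Equiv.swap c m') *
      (Equiv.swap i a * Equiv.swap j b * Equiv.swap m c), ?_, ?_, ?_⟩ <;>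
    simp only [Equiv.Perm.mul_apply]
  · rw [Equiv.swap_apply_of_ne_of_ne h2 (Ne.symm hc1),
      Equiv.swap_apply_of_ne_of_ne h1 (Ne.symm hb1),
      Equiv.swap_apply_left,
      Equiv.swap_apply_of_ne_of_ne (Ne.symm hc7) ha6,
      Equiv.swap_apply_of_ne_of_ne (Ne.symm hb7) ha5,
      Equiv.swap_apply_left]
  · rw [Equiv.swap_apply_of_ne_of_ne h3 (Ne.symm hc2),
      Equiv.swap_apply_left,
      Equiv.swap_apply_of_ne_of_ne hb1 hb7,
      Equiv.swap_apply_of_ne_of_ne (Ne.symm hc8) hb6,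
      Equiv.swap_apply_left,
      Equiv.swap_apply_of_ne_of_ne (Ne.symm ha5) (Ne.symm h1')]
  · rw [Equiv.swap_apply_left,
      Equiv.swap_apply_of_ne_of_ne hc2 hc8,
      Equiv.swap_apply_of_ne_of_ne hc1 hc7,
      Equiv.swap_apply_left,
      Equiv.swap_apply_of_ne_of_ne (Ne.symm hb6) (Ne.symm h3'),
      Equiv.swap_apply_of_ne_of_ne (Ne.symm ha6) (Ne.symm h2')]

/-- All the data and hypotheses of statement 12 bundled. -/
structure Pkg (Sg H₁ H₂ L I : Type) [AddCommGroup Sg] [AddCommGroup H₁] [AddCommGroup H₂]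
    [AddCommGroup L] [Countable I] [Infinite I] where
  ι : H₁ × H₁ →+ H₂
  hι : Function.Injective ι
  π : I → H₁ →+ Sg
  hπinj : ∀ i, Function.Injective (π i)
  π₂ : I → I → H₂ →+ Sg
  hπ₂inj : ∀ i j, i ≠ j → Function.Injective (π₂ i j)
  ψi : I → Sg →+ L
  ψ : H₂ →+ L
  γ : Equiv.Perm I → AddAut Sg
  hgen : AddSubgroup.closure (⋃ (i : I) (j : I) (_ : i ≠ j), Set.range (π₂ i j)) = ⊤
  hdirect : Function.Injective fun x : I →₀ H₁ => x.sum fun i a => π i a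
  hcompat : ∀ i j, i ≠ j → ∀ a b : H₁, π₂ i j (ι (a, b)) = π i a + π j b
  hψ₁ : ∀ i j, i ≠ j → ∀ x : H₂, ψi i (π₂ i j x) = ψ x
  hψ₂ : ∀ i j, i ≠ j → ∀ x : H₂, ψi j (π₂ i j x) = - ψ x
  hψ₃ : ∀ i j k, i ≠ j → k ≠ i → k ≠ j → ∀ x : H₂, ψi k (π₂ i j x) = 0
  hker : AddSubgroup.closure (⋃ i : I, Set.range (π i)) = ⨅ i : I, (ψi i).ker
  hequiv₁ : ∀ (β : Equiv.Perm I) (i : I) (a : H₁), γ β (π i a) = π (β i) a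
  hequiv₂ : ∀ (β : Equiv.Perm I) (i j : I), i ≠ j → ∀ x : H₂,
      γ β (π₂ i j x) = π₂ (β i) (β j) x

namespace Pkg

variable {Sg H₁ H₂ L I : Type} [AddCommGroup Sg] [AddCommGroup H₁] [AddCommGroup H₂]
    [AddCommGroup L] [Countable I] [Infinite I] (P : Pkg Sg H₁ H₂ L I)

/-- The sum homomorphism `⊕ H₁ → Σ`. -/
noncomputable def Λ : (I →₀ H₁) →+ Sg := Finsupp.liftAddHom P.π

lemma Λ_apply (x : I →₀ H₁) : P.Λ x = x.sum fun i a => P.π i a :=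
  Finsupp.liftAddHom_apply _ _

lemma Λ_single (i : I) (a : H₁) : P.Λ (Finsupp.single i a) = P.π i a := by
  simp [Λ]

lemma Λ_inj : Function.Injective P.Λ := by
  have : ⇑P.Λ = fun x : I →₀ H₁ => x.sum fun i a => P.π i a := by
    funext x; exact P.Λ_apply x
  rw [this]; exact P.hdirect

lemma range_Λ : P.Λ.range = AddSubgroup.closure (⋃ i : I, Set.range (P.π i)) := by
  apply le_antisymm
  · rintro _ ⟨x, rfl⟩
    rw [P.Λ_apply]
    refine AddSubgroup.sum_mem _ fun i _ => ?_
    exact AddSubgroup.subset_closure (Set.mem_iUnion.2 ⟨i, ⟨x i, rfl⟩⟩)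
  · rw [AddSubgroup.closure_le]
    rintro _ ⟨s, ⟨i, rfl⟩, ⟨a, rfl⟩⟩
    exact ⟨Finsupp.single i a, P.Λ_single i a⟩

lemma range_Λ_eq : P.Λ.range = ⨅ i : I, (P.ψi i).ker := by
  rw [P.range_Λ, P.hker]

lemma mem_range_Λ (σ : Sg) (h : ∀ i, P.ψi i σ = 0) : σ ∈ P.Λ.range := by
  rw [P.range_Λ_eq]
  rw [AddSubgroup.mem_iInf]
  intro i; exact h i

lemma ψi_Λ (i : I) (x : I →₀ H₁) : P.ψi i (P.Λ x) = 0 := by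
  have : P.Λ x ∈ ⨅ i : I, (P.ψi i).ker := by rw [← P.range_Λ_eq]; exact ⟨x, rfl⟩
  rw [AddSubgroup.mem_iInf] at this
  exact this i

lemma γ_Λ (β : Equiv.Perm I) (x : I →₀ H₁) :
    P.γ β (P.Λ x) = P.Λ (Finsupp.equivMapDomain β x) := by
  rw [P.Λ_apply, P.Λ_apply, map_finsuppSum]
  rw [Finsupp.sum_equivMapDomain]
  exact Finsupp.sum_congr fun i _ => P.hequiv₁ β i (x i)

/-- Extract a preimage under `Λ` with control on its support, from invariance
under transpositions avoiding `S`. -/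
lemma range_Λ_supp [DecidableEq I] {σ : Sg} (S : Finset I) (hσ : σ ∈ P.Λ.range)
    (hfix : ∀ k k' : I, k ∉ S → k' ∉ S → k ≠ k' → P.γ (Equiv.swap k k') σ = σ) :
    ∃ x : I →₀ H₁, P.Λ x = σ ∧ ∀ k ∉ S, x k = 0 := by
  classical
  obtain ⟨x, hx⟩ := hσ
  refine ⟨x, hx, fun k hk => ?_⟩
  obtain ⟨k', hk'⟩ := Infinite.exists_notMem_finset (S ∪ x.support ∪ {k})
  simp only [Finset.mem_union, Finset.mem_singleton, not_or] at hk'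
  obtain ⟨⟨hk'S, hk'supp⟩, hk'k⟩ := hk'
  have h1 : P.γ (Equiv.swap k k') (P.Λ x) = P.Λ x := by rw [hx]; exact hfix k k' hk hk'S (fun h => hk'k h.symm)
  rw [P.γ_Λ] at h1
  have h2 := P.Λ_inj h1
  have h3 : (Finsupp.equivMapDomain (Equiv.swap k k' : Equiv.Perm I) x) k' = x k := by
    rw [Finsupp.equivMapDomain_apply]
    congr 1
    simp [Equiv.symm_swap, Equiv.swap_apply_right]
  rw [h2] at h3
  rw [← h3]
  exact Finsupp.notMem_support_iff.1 hk'supp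

lemma eq_iota_of_mem_range_Λ [DecidableEq I] {i j : I} (hij : i ≠ j) {z : H₂}
    (h : P.π₂ i j z ∈ P.Λ.range) :
    ∃ a b : H₁, z = P.ι (a, b) ∧ P.π₂ i j z = P.π i a + P.π j b := by
  obtain ⟨x, hx, hsupp⟩ := P.range_Λ_supp ({i, j} : Finset I) h (by
    intro k k' hk hk' hkk'
    simp only [Finset.mem_insert, Finset.mem_singleton, not_or] at hk hk'
    rw [P.hequiv₂ _ i j hij z, Equiv.swap_apply_of_ne_of_ne (Ne.symm (hk.1)) (Ne.symm hk'.1),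
      Equiv.swap_apply_of_ne_of_ne (Ne.symm hk.2) (Ne.symm hk'.2)])
  have hxeq : x = Finsupp.single i (x i) + Finsupp.single j (x j) := by
    ext k
    by_cases hki : k = i
    · subst hki; simp [Finsupp.single_apply, hij, Ne.symm hij]
    · by_cases hkj : k = j
      · subst hkj; simp [Finsupp.single_apply, hij, Ne.symm hij]
      · simp only [Finsupp.add_apply, Finsupp.single_apply,
          if_neg (fun hh : i = k => hki hh.symm), if_neg (fun hh : j = k => hkj hh.symm),
          add_zero]
        exact hsupp k (by simp [hki, hkj])
  have : P.π₂ i j z = P.π i (x i) + P.π j (x j) := by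
    rw [← hx]
    conv_lhs => rw [hxeq]
    rw [map_add, P.Λ_single, P.Λ_single]
  refine ⟨x i, x j, P.hπ₂inj i j hij ?_, this⟩
  rw [this, P.hcompat i j hij]

lemma ψ_iota (a b : H₁) : P.ψ (P.ι (a, b)) = 0 := by
  classical
  obtain ⟨i, -⟩ := Infinite.exists_notMem_finset (∅ : Finset I)
  obtain ⟨j, hj⟩ := Infinite.exists_notMem_finset ({i} : Finset I)
  have hij : i ≠ j := fun h => hj (by simp [h])
  rw [← P.hψ₁ i j hij, P.hcompat i j hij, map_add]
  have h1 : P.π i a = P.Λ (Finsupp.single i a) := (P.Λ_single i a).symm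
  have h2 : P.π j b = P.Λ (Finsupp.single j b) := (P.Λ_single j b).symm
  rw [h1, h2, P.ψi_Λ, P.ψi_Λ, add_zero]

lemma eq_iota_of_ψ_eq_zero {z : H₂} (h : P.ψ z = 0) : ∃ a b : H₁, z = P.ι (a, b) := by
  classical
  obtain ⟨i, -⟩ := Infinite.exists_notMem_finset (∅ : Finset I)
  obtain ⟨j, hj⟩ := Infinite.exists_notMem_finset ({i} : Finset I)
  have hij : i ≠ j := fun h => hj (by simp [h])
  have : P.π₂ i j z ∈ P.Λ.range := P.mem_range_Λ _ (by
    intro k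
    by_cases hki : k = i
    · subst hki; rw [P.hψ₁ _ j hij, h]
    · by_cases hkj : k = j
      · subst hkj; rw [P.hψ₂ i _ hij, h, neg_zero]
      · exact P.hψ₃ i j k hij hki hkj z)
  obtain ⟨a, b, hab, -⟩ := P.eq_iota_of_mem_range_Λ hij this
  exact ⟨a, b, hab⟩

lemma finsupp_eq_triple' {I M : Type} [DecidableEq I] [AddCommMonoid M] (x : I →₀ M)
    (i j m : I) (hij : i ≠ j) (him : i ≠ m) (hjm : j ≠ m)
    (h : ∀ k, k ≠ i → k ≠ j → k ≠ m → x k = 0) :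
    x = Finsupp.single i (x i) + Finsupp.single j (x j) + Finsupp.single m (x m) := by
  ext k
  simp only [Finsupp.add_apply, Finsupp.single_apply]
  by_cases hki : k = i
  · subst hki
    rw [if_neg (fun hh : j = k => hij hh.symm), if_neg (fun hh : m = k => him hh.symm)]
    simp
  · by_cases hkj : k = j
    · subst hkj
      rw [if_neg (fun hh : i = k => hij hh), if_neg (fun hh : m = k => hjm hh.symm)]
      simp
    · by_cases hkm : k = m
      · subst hkm
        rw [if_neg (fun hh : i = k => him hh), if_neg (fun hh : j = k => hjm hh)]
        simp
      · rw [if_neg (fun hh : i = k => hki hh.symm), if_neg (fun hh : j = k => hkj hh.symm),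
          if_neg (fun hh : m = k => hkm hh.symm)]
        simp [h k hki hkj hkm]

lemma Emem (i j m : I) (hij : i ≠ j) (him : i ≠ m) (hjm : j ≠ m) (z : H₂) :
    P.π₂ i m z + P.π₂ m j z - P.π₂ i j z ∈ P.Λ.range := by
  apply P.mem_range_Λ
  intro k
  rw [map_sub, map_add]
  by_cases hki : k = i
  · subst hki
    rw [P.hψ₁ k m him, P.hψ₃ m j k (Ne.symm hjm) him hij, P.hψ₁ k j hij]
    abel
  · by_cases hkj : k = j
    · subst hkj
      rw [P.hψ₃ i m k him (Ne.symm hij) hjm, P.hψ₂ m k (Ne.symm hjm), P.hψ₂ i k hij]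
      abel
    · by_cases hkm : k = m
      · subst hkm
        rw [P.hψ₂ i k him, P.hψ₁ k j (Ne.symm hjm), P.hψ₃ i j k hij (Ne.symm him) (Ne.symm hjm)]
        abel
      · rw [P.hψ₃ i m k him hki hkm, P.hψ₃ m j k (Ne.symm hjm) hkm hkj,
          P.hψ₃ i j k hij hki hkj]
        abel

lemma exists_theta [DecidableEq I] :
    ∃ θ : H₂ →+ H₁, (∀ a b : H₁, θ (P.ι (a, b)) = a + b) ∧
      ∀ i j m : I, i ≠ j → i ≠ m → j ≠ m → ∀ z : H₂,
        P.π₂ i m z + P.π₂ m j z = P.π₂ i j z + P.π m (θ z) := by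
  -- fix a reference triple
  obtain ⟨i₀, -⟩ := Infinite.exists_notMem_finset (∅ : Finset I)
  obtain ⟨j₀, hj₀⟩ := Infinite.exists_notMem_finset ({i₀} : Finset I)
  obtain ⟨m₀, hm₀⟩ := Infinite.exists_notMem_finset ({i₀, j₀} : Finset I)
  simp only [Finset.mem_insert, Finset.mem_singleton, not_or] at hj₀ hm₀
  have hij₀ : i₀ ≠ j₀ := fun hh => hj₀ hh.symm
  have him₀ : i₀ ≠ m₀ := fun hh => hm₀.1 hh.symm
  have hjm₀ : j₀ ≠ m₀ := fun hh => hm₀.2 hh.symm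
  -- choose preimages with controlled support
  have key : ∀ z : H₂, ∃ x : I →₀ H₁,
      P.Λ x = P.π₂ i₀ m₀ z + P.π₂ m₀ j₀ z - P.π₂ i₀ j₀ z ∧
      ∀ k ∉ ({i₀, j₀, m₀} : Finset I), x k = 0 := by
    intro z
    apply P.range_Λ_supp _ (P.Emem i₀ j₀ m₀ hij₀ him₀ hjm₀ z)
    intro k k' hk hk' hkk'
    simp only [Finset.mem_insert, Finset.mem_singleton, not_or] at hk hk'
    rw [map_sub, map_add, P.hequiv₂ _ _ _ him₀, P.hequiv₂ _ _ _ (Ne.symm hjm₀),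
      P.hequiv₂ _ _ _ hij₀,
      Equiv.swap_apply_of_ne_of_ne (Ne.symm hk.1) (Ne.symm hk'.1),
      Equiv.swap_apply_of_ne_of_ne (Ne.symm hk.2.1) (Ne.symm hk'.2.1),
      Equiv.swap_apply_of_ne_of_ne (Ne.symm hk.2.2) (Ne.symm hk'.2.2)]
  choose x hx hsupp using key
  have xadd : ∀ z z' : H₂, x (z + z') = x z + x z' := by
    intro z z'
    apply P.Λ_inj
    rw [map_add, hx, hx, hx, map_add, map_add, map_add]
    abel
  -- decomposition of the reference element
  have decomp0 : ∀ z : H₂, P.π₂ i₀ m₀ z + P.π₂ m₀ j₀ z - P.π₂ i₀ j₀ z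
      = P.π i₀ (x z i₀) + P.π j₀ (x z j₀) + P.π m₀ (x z m₀) := by
    intro z
    rw [← hx z]
    conv_lhs => rw [finsupp_eq_triple' (x z) i₀ j₀ m₀ hij₀ him₀ hjm₀
      (fun k h1 h2 h3 => hsupp z k (by simp [h1, h2, h3]))]
    rw [map_add, map_add, P.Λ_single, P.Λ_single, P.Λ_single]
  -- transfer to an arbitrary distinct triple
  have decompAll : ∀ i j m : I, i ≠ j → i ≠ m → j ≠ m → ∀ z : H₂,
      P.π₂ i m z + P.π₂ m j z - P.π₂ i j z
      = P.π i (x z i₀) + P.π j (x z j₀) + P.π m (x z m₀) := by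
    intro i j m hij him hjm z
    obtain ⟨β, hβ1, hβ2, hβ3⟩ := exists_perm_triple hij₀ him₀ hjm₀ hij him hjm
    have := congrArg (P.γ β) (decomp0 z)
    rw [map_sub, map_add, map_add, map_add, P.hequiv₂ _ _ _ him₀, P.hequiv₂ _ _ _ (Ne.symm hjm₀),
      P.hequiv₂ _ _ _ hij₀, P.hequiv₁, P.hequiv₁, P.hequiv₁, hβ1, hβ2, hβ3] at this
    exact this
  -- kill the parasitic components
  obtain ⟨n, hn⟩ := Infinite.exists_notMem_finset ({i₀, j₀, m₀} : Finset I)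
  simp only [Finset.mem_insert, Finset.mem_singleton, not_or] at hn
  have hin : i₀ ≠ n := fun hh => hn.1 hh.symm
  have hjn : j₀ ≠ n := fun hh => hn.2.1 hh.symm
  have hmn : m₀ ≠ n := fun hh => hn.2.2 hh.symm
  have hzero : ∀ z : H₂, x z i₀ = 0 ∧ x z j₀ = 0 := by
    intro z
    have formal : (P.π₂ i₀ n z + P.π₂ n j₀ z - P.π₂ i₀ j₀ z)
        + (P.π₂ i₀ m₀ z + P.π₂ m₀ n z - P.π₂ i₀ n z)
        = (P.π₂ i₀ m₀ z + P.π₂ m₀ j₀ z - P.π₂ i₀ j₀ z)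
        + (P.π₂ m₀ n z + P.π₂ n j₀ z - P.π₂ m₀ j₀ z) := by abel
    rw [decompAll i₀ j₀ n hij₀ hin hjn z,
      decompAll i₀ n m₀ hin him₀ (Ne.symm hmn) z,
      decompAll i₀ j₀ m₀ hij₀ him₀ hjm₀ z,
      decompAll m₀ j₀ n (Ne.symm hjm₀) hmn hjn z] at formal
    simp only [← P.Λ_single, ← map_add] at formal
    have heq := P.Λ_inj formal
    constructor
    · have := DFunLike.congr_fun heq i₀
      simp only [Finsupp.add_apply, Finsupp.single_apply, if_pos rfl,
        if_neg (fun hh : j₀ = i₀ => hij₀ hh.symm), if_neg (fun hh : n = i₀ => hin hh.symm),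
        if_neg (fun hh : m₀ = i₀ => him₀ hh.symm), if_true, add_zero, zero_add] at this
      exact add_eq_right.mp this
    · have := DFunLike.congr_fun heq j₀
      simp only [Finsupp.add_apply, Finsupp.single_apply, if_pos rfl,
        if_neg (fun hh : i₀ = j₀ => hij₀ hh), if_neg (fun hh : n = j₀ => hjn hh.symm),
        if_neg (fun hh : m₀ = j₀ => hjm₀ hh.symm), if_true, add_zero, zero_add] at this
      exact add_eq_right.mp this.symm
  refine ⟨AddMonoidHom.mk' (fun z => x z m₀) (fun z z' => by simp only [xadd, Finsupp.add_apply]), ?_, ?_⟩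
  · intro a b
    have h1 := decompAll i₀ j₀ m₀ hij₀ him₀ hjm₀ (P.ι (a, b))
    rw [(hzero _).1, (hzero _).2, map_zero, map_zero, zero_add, zero_add] at h1
    have h2 : P.π₂ i₀ m₀ (P.ι (a, b)) + P.π₂ m₀ j₀ (P.ι (a, b)) - P.π₂ i₀ j₀ (P.ι (a, b))
        = P.π m₀ (a + b) := by
      rw [P.hcompat _ _ him₀, P.hcompat _ _ (Ne.symm hjm₀), P.hcompat _ _ hij₀, map_add]
      abel
    apply P.hπinj m₀
    simp only [AddMonoidHom.mk'_apply]
    rw [← h1]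
    exact h2
  · intro i j m hij him hjm z
    have h1 := decompAll i j m hij him hjm z
    rw [(hzero _).1, (hzero _).2, map_zero, map_zero, zero_add, zero_add] at h1
    rw [sub_eq_iff_eq_add] at h1
    rw [h1]
    simp only [AddMonoidHom.mk'_apply]
    abel

lemma ψi_π (k i : I) (a : H₁) : P.ψi k (P.π i a) = 0 := by
  rw [← P.Λ_single i a]; exact P.ψi_Λ k _

lemma swap_rel [DecidableEq I] (θ : H₂ →+ H₁)
    (hR : ∀ i j m : I, i ≠ j → i ≠ m → j ≠ m → ∀ z : H₂,
      P.π₂ i m z + P.π₂ m j z = P.π₂ i j z + P.π m (θ z)) :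
    ∀ i j : I, i ≠ j → ∀ z : H₂,
      P.π₂ j i z = - P.π₂ i j z + P.π i (θ z) + P.π j (θ z) := by
  have Dmem : ∀ i j : I, i ≠ j → ∀ z : H₂, ∃ u : I →₀ H₁,
      P.Λ u = P.π₂ i j z + P.π₂ j i z - P.π i (θ z) - P.π j (θ z) ∧
      ∀ k ∉ ({i, j} : Finset I), u k = 0 := by
    intro i j hij z
    apply P.range_Λ_supp
    · apply P.mem_range_Λ
      intro k
      rw [map_sub, map_sub, map_add, P.ψi_π, P.ψi_π]
      by_cases hki : k = i
      · subst hki; rw [P.hψ₁ k j hij, P.hψ₂ j k (Ne.symm hij)]; abel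
      · by_cases hkj : k = j
        · subst hkj; rw [P.hψ₂ i k hij, P.hψ₁ k i (Ne.symm hij)]; abel
        · rw [P.hψ₃ i j k hij hki hkj, P.hψ₃ j i k (Ne.symm hij) hkj hki]; abel
    · intro k k' hk hk' hkk'
      simp only [Finset.mem_insert, Finset.mem_singleton, not_or] at hk hk'
      rw [map_sub, map_sub, map_add, P.hequiv₂ _ _ _ hij, P.hequiv₂ _ _ _ (Ne.symm hij),
        P.hequiv₁, P.hequiv₁,
        Equiv.swap_apply_of_ne_of_ne (Ne.symm hk.1) (Ne.symm hk'.1),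
        Equiv.swap_apply_of_ne_of_ne (Ne.symm hk.2) (Ne.symm hk'.2)]
  have Dshift : ∀ i j m : I, i ≠ j → i ≠ m → j ≠ m → ∀ z : H₂,
      P.π₂ i j z + P.π₂ j i z - P.π i (θ z) - P.π j (θ z)
      = P.π₂ m j z + P.π₂ j m z - P.π m (θ z) - P.π j (θ z) := by
    intro i j m hij him hjm z
    have e1 : P.π₂ j i z = P.π₂ j m z + P.π₂ m i z - P.π m (θ z) := by
      rw [eq_sub_iff_add_eq]
      exact (hR j i m (Ne.symm hij) hjm him z).symm
    have e2 : P.π₂ i j z = P.π₂ m j z + P.π i (θ z) - P.π₂ m i z := by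
      rw [eq_sub_iff_add_eq, add_comm]
      exact hR m j i (Ne.symm hjm) (Ne.symm him) (Ne.symm hij) z
    rw [e1, e2]; abel
  intro i j hij z
  obtain ⟨m, hm⟩ := Infinite.exists_notMem_finset ({i, j} : Finset I)
  obtain ⟨l, hl⟩ := Infinite.exists_notMem_finset ({i, j, m} : Finset I)
  simp only [Finset.mem_insert, Finset.mem_singleton, not_or] at hm hl
  have hD : P.π₂ i j z + P.π₂ j i z - P.π i (θ z) - P.π j (θ z) = 0 := by
    obtain ⟨u, hu, husupp⟩ := Dmem i j hij z
    obtain ⟨u', hu', husupp'⟩ := Dmem l m (fun hh => hl.2.2 hh) z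
    have step1 : P.π₂ i j z + P.π₂ j i z - P.π i (θ z) - P.π j (θ z)
        = P.π₂ m j z + P.π₂ j m z - P.π m (θ z) - P.π j (θ z) :=
      Dshift i j m hij (fun hh => hm.1 hh.symm) (fun hh => hm.2 hh.symm) z
    have step2 : P.π₂ j m z + P.π₂ m j z - P.π j (θ z) - P.π m (θ z)
        = P.π₂ l m z + P.π₂ m l z - P.π l (θ z) - P.π m (θ z) :=
      Dshift j m l (fun hh => hm.2 hh.symm) (fun hh => hl.2.1 hh.symm)
        (fun hh => hl.2.2 hh.symm) z
    have huu : P.Λ u = P.Λ u' := by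
      rw [hu, hu', step1]
      rw [show P.π₂ m j z + P.π₂ j m z - P.π m (θ z) - P.π j (θ z)
        = P.π₂ j m z + P.π₂ m j z - P.π j (θ z) - P.π m (θ z) from by abel, step2]
    have huu' := P.Λ_inj huu
    have hu0 : u = 0 := by
      ext k
      simp only [Finsupp.coe_zero, Pi.zero_apply]
      by_cases hki : k = i
      · subst hki
        rw [huu']
        refine husupp' k ?_
        simp only [Finset.mem_insert, Finset.mem_singleton, not_or]
        exact ⟨fun hh => hl.1 hh.symm, fun hh => hm.1 hh.symm⟩
      · by_cases hkj : k = j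
        · subst hkj
          rw [huu']
          refine husupp' k ?_
          simp only [Finset.mem_insert, Finset.mem_singleton, not_or]
          exact ⟨fun hh => hl.2.1 hh.symm, fun hh => hm.2 hh.symm⟩
        · exact husupp k (by simp [hki, hkj])
    rw [hu0, map_zero] at hu
    exact hu.symm
  have h2 : P.π₂ j i z - (-P.π₂ i j z + P.π i (θ z) + P.π j (θ z))
      = P.π₂ i j z + P.π₂ j i z - P.π i (θ z) - P.π j (θ z) := by abel
  rw [← sub_eq_zero, h2, hD]

/-! ### The reconstructed group -/

/-- The subgroup `ι({0} × H₁) ⊆ H₂`. -/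
def Nsub : AddSubgroup H₂ := (P.ι.comp (AddMonoidHom.inr H₁ H₁)).range

/-- The reconstructed group `H := H₂/ι({0} × H₁)`. -/
abbrev HQ := H₂ ⧸ P.Nsub

noncomputable def q : H₂ →+ P.HQ := QuotientAddGroup.mk' P.Nsub

lemma q_surj : Function.Surjective P.q := QuotientAddGroup.mk'_surjective _

lemma q_eq_zero_iff (z : H₂) : P.q z = 0 ↔ ∃ b : H₁, z = P.ι (0, b) := by
  rw [q, QuotientAddGroup.mk'_apply, QuotientAddGroup.eq_zero_iff]
  constructor
  · rintro ⟨b, hb⟩; exact ⟨b, hb.symm⟩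
  · rintro ⟨b, hb⟩; exact ⟨b, hb.symm⟩

/-- `H₁ → H`, `a ↦ [ι(a,0)]`. -/
noncomputable def h1 : H₁ →+ P.HQ := P.q.comp (P.ι.comp (AddMonoidHom.inl H₁ H₁))

lemma h1_apply (a : H₁) : P.h1 a = P.q (P.ι (a, 0)) := rfl

lemma h1_inj : Function.Injective P.h1 := by
  intro a a' h
  have h2 : P.q (P.ι (a - a', 0)) = 0 := by
    have : P.ι (a - a', 0) = P.ι (a, 0) - P.ι (a', 0) := by
      rw [← map_sub]; norm_num
    rw [this, map_sub, ← h1_apply, ← h1_apply, h, sub_self]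
  rw [P.q_eq_zero_iff] at h2
  obtain ⟨b, hb⟩ := h2
  have h4 := P.hι hb
  have h3 : a - a' = 0 := congrArg Prod.fst h4
  exact sub_eq_zero.mp h3

/-- The subgroup `H₀ ⊆ H`. -/
noncomputable def H0 : AddSubgroup P.HQ := P.h1.range

lemma q_iota (a b : H₁) : P.q (P.ι (a, b)) = P.h1 a := by
  have : P.ι (a, b) = P.ι (a, 0) + P.ι (0, b) := by rw [← map_add]; norm_num
  rw [this, map_add, h1_apply]
  have : P.q (P.ι (0, b)) = 0 := (P.q_eq_zero_iff _).2 ⟨b, rfl⟩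
  rw [this, add_zero]

/-- The "second coordinate" map `H₂ → H`. -/
noncomputable def sc (θ : H₂ →+ H₁) : H₂ →+ P.HQ := (P.h1.comp θ) - P.q

lemma sc_apply (θ : H₂ →+ H₁) (z : H₂) : P.sc θ z = P.h1 (θ z) - P.q z := rfl

lemma sc_iota (θ : H₂ →+ H₁) (hθι : ∀ a b : H₁, θ (P.ι (a, b)) = a + b) (a b : H₁) :
    P.sc θ (P.ι (a, b)) = P.h1 b := by
  rw [sc_apply, hθι, q_iota, map_add]; abel

lemma q_add_sc (θ : H₂ →+ H₁) (z : H₂) : P.q z + P.sc θ z = P.h1 (θ z) := by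
  rw [sc_apply]; abel

lemma ρ_surj (θ : H₂ →+ H₁) (hθι : ∀ a b : H₁, θ (P.ι (a, b)) = a + b)
    (x y : P.HQ) (h : x + y ∈ P.H0) : ∃ z : H₂, P.q z = x ∧ P.sc θ z = y := by
  obtain ⟨z₀, hz₀⟩ := P.q_surj x
  obtain ⟨a, ha⟩ := h
  refine ⟨z₀ + P.ι (0, a - θ z₀), ?_, ?_⟩
  · rw [map_add, hz₀, (P.q_eq_zero_iff _).2 ⟨_, rfl⟩, add_zero]
  · rw [map_add, P.sc_iota θ hθι, P.sc_apply, hz₀, map_sub]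
    rw [ha]
    abel

lemma ρ_inj (θ : H₂ →+ H₁) (hθι : ∀ a b : H₁, θ (P.ι (a, b)) = a + b)
    (z : H₂) (h1 : P.q z = 0) (h2 : P.sc θ z = 0) : z = 0 := by
  obtain ⟨b, hb⟩ := (P.q_eq_zero_iff z).1 h1
  rw [hb, P.sc_iota θ hθι] at h2
  have : b = 0 := P.h1_inj (by rw [h2, map_zero])
  rw [hb, this]
  have : ((0 : H₁), (0 : H₁)) = (0 : H₁ × H₁) := rfl
  rw [this, map_zero]

/-! ### The subgroups `G k` of elements supported away from `k` -/

/-- The subgroup of `Σ` generated by images of `π₂ i j` with `i, j ≠ k`. -/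
def Gk (k : I) : AddSubgroup Sg :=
  AddSubgroup.closure (⋃ (i : I) (j : I) (_ : i ≠ j ∧ i ≠ k ∧ j ≠ k), Set.range (P.π₂ i j))

lemma mem_Gk_π₂ {i j k : I} (hij : i ≠ j) (hik : i ≠ k) (hjk : j ≠ k) (z : H₂) :
    P.π₂ i j z ∈ P.Gk k :=
  AddSubgroup.subset_closure (Set.mem_iUnion.2 ⟨i, Set.mem_iUnion.2 ⟨j,
    Set.mem_iUnion.2 ⟨⟨hij, hik, hjk⟩, ⟨z, rfl⟩⟩⟩⟩)

lemma mem_Gk_π {i k : I} (hik : i ≠ k) (a : H₁) : P.π i a ∈ P.Gk k := by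
  classical
  obtain ⟨j, hj⟩ := Infinite.exists_notMem_finset ({i, k} : Finset I)
  simp only [Finset.mem_insert, Finset.mem_singleton, not_or] at hj
  have : P.π i a = P.π₂ i j (P.ι (a, 0)) := by
    rw [P.hcompat i j (fun hh => hj.1 hh.symm), map_zero, add_zero]
  rw [this]
  exact P.mem_Gk_π₂ (fun hh => hj.1 hh.symm) hik hj.2 _

lemma ψi_Gk {k : I} {g : Sg} (hg : g ∈ P.Gk k) : P.ψi k g = 0 := by
  induction hg using AddSubgroup.closure_induction with
  | mem s hs =>
    obtain ⟨i, j, ⟨hij, hik, hjk⟩, z, rfl⟩ := by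
      simpa only [Set.mem_iUnion] using hs
    exact P.hψ₃ i j k hij (Ne.symm hik) (Ne.symm hjk) z
  | zero => exact map_zero _
  | add a b _ _ ha hb => rw [map_add, ha, hb, add_zero]
  | neg a _ ha => rw [map_neg, ha, neg_zero]

lemma γ_Gk {k : I} {g : Sg} (hg : g ∈ P.Gk k) (β : Equiv.Perm I) :
    P.γ β g ∈ P.Gk (β k) := by
  induction hg using AddSubgroup.closure_induction with
  | mem s hs =>
    obtain ⟨i, j, ⟨hij, hik, hjk⟩, z, rfl⟩ := by
      simpa only [Set.mem_iUnion] using hs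
    rw [P.hequiv₂ β i j hij z]
    exact P.mem_Gk_π₂ (fun hh => hij (β.injective hh)) (fun hh => hik (β.injective hh))
      (fun hh => hjk (β.injective hh)) z
  | zero => rw [map_zero]; exact zero_mem _
  | add a b _ _ ha hb => rw [map_add]; exact add_mem ha hb
  | neg a _ ha => rw [map_neg]; exact neg_mem ha

/-- Existence of decompositions: `Σ = G k + π₂ k (nxt k) (H₂)`. -/
lemma decomp (θ : H₂ →+ H₁)
    (hR : ∀ i j m : I, i ≠ j → i ≠ m → j ≠ m → ∀ z : H₂,
      P.π₂ i m z + P.π₂ m j z = P.π₂ i j z + P.π m (θ z))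
    (hR2 : ∀ i j : I, i ≠ j → ∀ z : H₂,
      P.π₂ j i z = - P.π₂ i j z + P.π i (θ z) + P.π j (θ z))
    (nxt : I → I) (hnxt : ∀ k, nxt k ≠ k) (k : I) (σ : Sg) :
    ∃ g z, g ∈ P.Gk k ∧ σ = g + P.π₂ k (nxt k) z := by
  have hσ : σ ∈ AddSubgroup.closure (⋃ (i : I) (j : I) (_ : i ≠ j), Set.range (P.π₂ i j)) := by
    rw [P.hgen]; trivial
  -- key step: any generator with first index `k` decomposes
  have key : ∀ j, j ≠ k → ∀ z : H₂, ∃ g, g ∈ P.Gk k ∧ P.π₂ k j z = g + P.π₂ k (nxt k) z := by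
    intro j hj z
    by_cases hjn : j = nxt k
    · exact ⟨0, zero_mem _, by rw [hjn, zero_add]⟩
    · -- use relation R with (i,j,m) := (k, j, nxt k)
      have h := hR k j (nxt k) (Ne.symm hj) (Ne.symm (hnxt k)) (fun hh => hjn hh) z
      refine ⟨P.π₂ (nxt k) j z - P.π (nxt k) (θ z), ?_, ?_⟩
      · exact sub_mem (P.mem_Gk_π₂ (fun hh => hjn hh.symm) (hnxt k) hj z)
          (P.mem_Gk_π (hnxt k) (θ z))
      · have h6 : P.π₂ k j z = P.π₂ k (nxt k) z + P.π₂ (nxt k) j z - P.π (nxt k) (θ z) := by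
          rw [eq_sub_iff_add_eq, h]
        rw [h6]; abel
  induction hσ using AddSubgroup.closure_induction with
  | mem s hs =>
    obtain ⟨i, j, hij, z, rfl⟩ := by simpa only [Set.mem_iUnion] using hs
    by_cases hik : i = k
    · subst hik
      obtain ⟨g, hg, hgeq⟩ := key j (Ne.symm hij) z
      exact ⟨g, z, hg, hgeq⟩
    · by_cases hjk : j = k
      · subst hjk
        -- second index is k : use the swap relation
        have h2 := hR2 j i (Ne.symm hij) z
        -- π₂ i j z = - π₂ j i z + π i θz + π j θz  (with j = k)
        obtain ⟨g, hg, hgeq⟩ := key i hik (P.ι (θ z, 0) - z)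
        refine ⟨g + P.π i (θ z), P.ι (θ z, 0) - z, add_mem hg (P.mem_Gk_π hik (θ z)), ?_⟩
        have h3 : P.π₂ j i (P.ι (θ z, 0) - z) = P.π j (θ z) - P.π₂ j i z := by
          rw [map_sub, P.hcompat j i (Ne.symm hij), map_zero, add_zero]
        have h5 : g = P.π₂ j i (P.ι (θ z, 0) - z) - P.π₂ j (nxt j) (P.ι (θ z, 0) - z) := by
          rw [hgeq]; abel
        rw [h2, h5, h3]; abel
      · exact ⟨P.π₂ i j z, 0, P.mem_Gk_π₂ hij hik hjk z, by rw [map_zero, add_zero]⟩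
  | zero => exact ⟨0, 0, zero_mem _, by rw [map_zero, add_zero]⟩
  | add a b _ _ ha hb =>
    obtain ⟨g, z, hg, rfl⟩ := ha
    obtain ⟨g', z', hg', rfl⟩ := hb
    exact ⟨g + g', z + z', add_mem hg hg', by rw [map_add]; abel⟩
  | neg a _ ha =>
    obtain ⟨g, z, hg, rfl⟩ := ha
    exact ⟨-g, -z, neg_mem hg, by rw [map_neg]; abel⟩

lemma Gk_fix [DecidableEq I] {k : I} {σ : Sg} (h : σ ∈ P.Gk k) :
    ∃ F : Finset I, k ∉ F ∧ ∀ k' ∉ F, k' ≠ k → P.γ (Equiv.swap k k') σ = σ := by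
  induction h using AddSubgroup.closure_induction with
  | mem s hs =>
    obtain ⟨i, j, ⟨hij, hik, hjk⟩, z, rfl⟩ := by
      simpa only [Set.mem_iUnion] using hs
    refine ⟨{i, j}, by simp [Ne.symm hik, Ne.symm hjk], fun k' hk' hk'k => ?_⟩
    simp only [Finset.mem_insert, Finset.mem_singleton, not_or] at hk'
    rw [P.hequiv₂ _ i j hij z,
      Equiv.swap_apply_of_ne_of_ne hik (fun hh => hk'.1 hh.symm),
      Equiv.swap_apply_of_ne_of_ne hjk (fun hh => hk'.2 hh.symm)]
  | zero => exact ⟨∅, by simp, fun k' _ _ => map_zero _⟩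
  | add a b _ _ ha hb =>
    obtain ⟨F1, hF1, h1⟩ := ha
    obtain ⟨F2, hF2, h2⟩ := hb
    exact ⟨F1 ∪ F2, by simp [hF1, hF2], fun k' hk' hk'k => by
      simp only [Finset.mem_union, not_or] at hk'
      rw [map_add, h1 k' hk'.1 hk'k, h2 k' hk'.2 hk'k]⟩
  | neg a _ ha =>
    obtain ⟨F1, hF1, h1⟩ := ha
    exact ⟨F1, hF1, fun k' hk' hk'k => by rw [map_neg, h1 k' hk' hk'k]⟩

lemma Λ_mem_Gk [DecidableEq I] {k : I} {x : I →₀ H₁} (h : P.Λ x ∈ P.Gk k) : x k = 0 := by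
  obtain ⟨F, hkF, hfix⟩ := P.Gk_fix h
  obtain ⟨k', hk'⟩ := Infinite.exists_notMem_finset (F ∪ x.support ∪ {k})
  simp only [Finset.mem_union, Finset.mem_singleton, not_or] at hk'
  obtain ⟨⟨h1, h2⟩, h3⟩ := hk'
  have hfix' := hfix k' h1 h3
  rw [P.γ_Λ] at hfix'
  have h4 := P.Λ_inj hfix'
  have h5 : (Finsupp.equivMapDomain (Equiv.swap k k' : Equiv.Perm I) x) k' = x k := by
    rw [Finsupp.equivMapDomain_apply]
    congr 1
    simp [Equiv.symm_swap, Equiv.swap_apply_right]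
  rw [h4] at h5
  rw [← h5]
  exact Finsupp.notMem_support_iff.1 h2

theorem main :
    ∃ (H : Type) (_ : AddCommGroup H) (H₀ : AddSubgroup H)
      (δ₁ : H₀ ≃+ H₁)
      (δ₂ : (H₀.comap (AddMonoidHom.fst H H + AddMonoidHom.snd H H)) ≃+ H₂)
      (δ : (H₀.comap (Finsupp.liftAddHom fun _ : I => AddMonoidHom.id H)) ≃+ Sg),
      (∀ (β : Equiv.Perm I) (s : Sg),
        ((δ.symm (P.γ β s) : I →₀ H)) = Finsupp.equivMapDomain β (δ.symm s : I →₀ H)) ∧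
      (∀ (i : I) (a : H₀),
        ((δ.symm (P.π i (δ₁ a)) : I →₀ H)) = Finsupp.single i (a : H)) ∧
      (∀ (i j : I), i ≠ j →
        ∀ z : (H₀.comap (AddMonoidHom.fst H H + AddMonoidHom.snd H H)),
          ((δ.symm (P.π₂ i j (δ₂ z)) : I →₀ H)) =
            Finsupp.single i (z : H × H).1 + Finsupp.single j (z : H × H).2) := by
  classical
  obtain ⟨θ, hθι, hR⟩ := P.exists_theta
  have hR2 := P.swap_rel θ hR
  have hnxt' : ∀ k : I, ∃ j, j ≠ k := fun k => by
    obtain ⟨j, hj⟩ := Infinite.exists_notMem_finset ({k} : Finset I)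
    exact ⟨j, by simpa using hj⟩
  choose nxt hnxt using hnxt'
  -- the coordinate functions
  choose gg zz hgg hzz using P.decomp θ hR hR2 nxt hnxt
  have cWD : ∀ (k : I) (g g' : Sg) (z z' : H₂), g ∈ P.Gk k → g' ∈ P.Gk k →
      g + P.π₂ k (nxt k) z = g' + P.π₂ k (nxt k) z' → P.q z = P.q z' := by
    intro k g g' z z' hg hg' heq
    have h1 : P.π₂ k (nxt k) (z - z') = g' - g := by
      rw [map_sub, sub_eq_sub_iff_add_eq_add, add_comm ((P.π₂ k (nxt k)) z) g]
      exact heq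
    have h2 : P.ψ (z - z') = 0 := by
      rw [← P.hψ₁ k (nxt k) (Ne.symm (hnxt k)), h1, map_sub, P.ψi_Gk hg', P.ψi_Gk hg,
        sub_zero]
    obtain ⟨a, b, hab⟩ := P.eq_iota_of_ψ_eq_zero h2
    have h3 : P.π₂ k (nxt k) (z - z') = P.π k a + P.π (nxt k) b := by
      rw [hab, P.hcompat k (nxt k) (Ne.symm (hnxt k))]
    have h4 : P.π k a ∈ P.Gk k := by
      have : P.π k a = (g' - g) - P.π (nxt k) b := by rw [← h1, h3]; abel
      rw [this]
      exact sub_mem (sub_mem hg' hg) (P.mem_Gk_π (hnxt k) b)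
    have h5 : a = 0 := by
      have := P.Λ_mem_Gk (x := Finsupp.single k a) (by rwa [P.Λ_single])
      simpa using this
    have h6 : z - z' = P.ι (0, b) := by rw [hab, h5]
    have h7 : P.q (z - z') = 0 := (P.q_eq_zero_iff _).2 ⟨b, h6⟩
    rw [map_sub, sub_eq_zero] at h7
    exact h7
  set c : I → Sg → P.HQ := fun k σ => P.q (zz k σ) with hc
  have c_spec : ∀ (k : I) (σ : Sg) (g : Sg) (z : H₂), g ∈ P.Gk k →
      σ = g + P.π₂ k (nxt k) z → c k σ = P.q z := by
    intro k σ g z hg hσ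
    exact cWD k (gg k σ) g (zz k σ) z (hgg k σ) hg (by rw [← hzz k σ, ← hσ])
  have cG : ∀ (k : I) (g : Sg), g ∈ P.Gk k → c k g = 0 := by
    intro k g hg
    rw [c_spec k g g 0 hg (by rw [map_zero, add_zero]), map_zero]
  have c_add : ∀ (k : I) (σ σ' : Sg), c k (σ + σ') = c k σ + c k σ' := by
    intro k σ σ'
    have h := c_spec k (σ + σ') (gg k σ + gg k σ') (zz k σ + zz k σ')
      (add_mem (hgg k σ) (hgg k σ'))
      (by conv_lhs => rw [hzz k σ, hzz k σ']
          rw [map_add]; abel)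
    rw [h, map_add]
  have c_zero : ∀ k : I, c k 0 = 0 := fun k => cG k 0 (zero_mem _)
  have c_neg : ∀ (k : I) (σ : Sg), c k (-σ) = - c k σ := by
    intro k σ
    have h := c_add k (-σ) σ
    rw [neg_add_cancel, c_zero] at h
    exact eq_neg_of_add_eq_zero_left h.symm
  have cval1 : ∀ i j : I, i ≠ j → ∀ z : H₂, c i (P.π₂ i j z) = P.q z := by
    intro i j hij z
    by_cases hjn : j = nxt i
    · subst hjn
      exact c_spec i _ 0 z (zero_mem _) (by rw [zero_add])
    · have h := hR i j (nxt i) hij (Ne.symm (hnxt i)) (fun hh => hjn hh) z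
      refine c_spec i _ (P.π₂ (nxt i) j z - P.π (nxt i) (θ z)) z
        (sub_mem (P.mem_Gk_π₂ (fun hh => hjn hh.symm) (hnxt i) hij.symm z)
          (P.mem_Gk_π (hnxt i) (θ z))) ?_
      have h6 : P.π₂ i j z = P.π₂ i (nxt i) z + P.π₂ (nxt i) j z - P.π (nxt i) (θ z) := by
        rw [eq_sub_iff_add_eq, h]
      rw [h6]; abel
  have cval3 : ∀ i j k : I, i ≠ j → k ≠ i → k ≠ j → ∀ z : H₂, c k (P.π₂ i j z) = 0 :=
    fun i j k hij hki hkj z => cG k _ (P.mem_Gk_π₂ hij (Ne.symm hki) (Ne.symm hkj) z)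
  have cval4 : ∀ (k : I) (a : H₁), c k (P.π k a) = P.h1 a := by
    intro k a
    have h := c_spec k (P.π k a) 0 (P.ι (a, 0)) (zero_mem _)
      (by rw [zero_add, P.hcompat k (nxt k) (Ne.symm (hnxt k)), map_zero, add_zero])
    rw [h, P.h1_apply]
  have cval5 : ∀ (k i : I) (a : H₁), i ≠ k → c k (P.π i a) = 0 :=
    fun k i a h => cG k _ (P.mem_Gk_π h a)
  have cval2 : ∀ i j : I, i ≠ j → ∀ z : H₂, c j (P.π₂ i j z) = P.sc θ z := by
    intro i j hij z
    have h2 := hR2 i j hij z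
    have e : P.π₂ i j z = - P.π₂ j i z + P.π i (θ z) + P.π j (θ z) := by
      rw [h2]; abel
    rw [e, c_add, c_add, c_neg, cval1 j i (Ne.symm hij) z, cval5 j i (θ z) hij,
      cval4 j (θ z), P.sc_apply]
    abel
  have c_spec' : ∀ (k j : I) (σ g : Sg) (z : H₂), g ∈ P.Gk k → j ≠ k →
      σ = g + P.π₂ k j z → c k σ = P.q z := by
    intro k j σ g z hg hjk hσ
    rw [hσ, c_add, cG k g hg, zero_add, cval1 k j (Ne.symm hjk) z]
  have cequiv : ∀ (β : Equiv.Perm I) (k : I) (σ : Sg),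
      c k (P.γ β σ) = c (β.symm k) σ := by
    intro β k σ
    have e : P.γ β σ = P.γ β (gg (β.symm k) σ) + P.π₂ k (β (nxt (β.symm k))) (zz (β.symm k) σ) := by
      conv_lhs => rw [hzz (β.symm k) σ]
      rw [map_add, P.hequiv₂ β (β.symm k) (nxt (β.symm k)) (Ne.symm (hnxt (β.symm k))) _,
        Equiv.apply_symm_apply]
    have hmem : P.γ β (gg (β.symm k) σ) ∈ P.Gk k := by
      have := P.γ_Gk (hgg (β.symm k) σ) β
      rwa [Equiv.apply_symm_apply] at this
    have hne : β (nxt (β.symm k)) ≠ k := by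
      intro hh
      exact hnxt (β.symm k) (β.injective (by rw [hh, Equiv.apply_symm_apply]))
    rw [c_spec' k _ _ _ _ hmem hne e]
  -- finite support
  have cfin : ∀ σ : Sg, (Function.support fun k => c k σ).Finite := by
    intro σ
    have hσ : σ ∈ AddSubgroup.closure
        (⋃ (i : I) (j : I) (_ : i ≠ j), Set.range (P.π₂ i j)) := by rw [P.hgen]; trivial
    induction hσ using AddSubgroup.closure_induction with
    | mem s hs =>
      obtain ⟨i, j, hij, z, rfl⟩ := by simpa only [Set.mem_iUnion] using hs
      apply Set.Finite.subset ((Set.finite_singleton j).insert i)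
      intro k hk
      by_contra hknot
      simp only [Set.mem_insert_iff, Set.mem_singleton_iff, not_or] at hknot
      exact hk (cval3 i j k hij hknot.1 hknot.2 z)
    | zero =>
      apply Set.Finite.subset (Set.finite_empty)
      intro k hk
      exact hk (c_zero k)
    | add a b _ _ ha hb =>
      apply Set.Finite.subset (ha.union hb)
      intro k hk
      by_contra hknot
      simp only [Set.mem_union, Function.mem_support, not_or, not_not] at hknot
      refine hk ?_
      show c k (a + b) = 0
      rw [c_add, hknot.1, hknot.2, add_zero]
    | neg a _ ha =>
      apply Set.Finite.subset ha
      intro k hk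
      by_contra hknot
      simp only [Function.mem_support, not_not] at hknot
      refine hk ?_
      show c k (-a) = 0
      rw [c_neg, hknot, neg_zero]
  -- the homomorphism Φ
  set Φ : Sg →+ (I →₀ P.HQ) := AddMonoidHom.mk'
    (fun σ => Finsupp.ofSupportFinite (fun k => c k σ) (cfin σ))
    (fun σ σ' => by
      ext k
      simp only [Finsupp.ofSupportFinite_coe, Finsupp.add_apply]
      exact c_add k σ σ') with hΦ
  have Φ_apply : ∀ (σ : Sg) (k : I), Φ σ k = c k σ := fun σ k => rfl
  -- image of the generators
  have Φπ₂ : ∀ i j : I, i ≠ j → ∀ z : H₂,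
      Φ (P.π₂ i j z) = Finsupp.single i (P.q z) + Finsupp.single j (P.sc θ z) := by
    intro i j hij z
    ext k
    rw [Φ_apply, Finsupp.add_apply, Finsupp.single_apply, Finsupp.single_apply]
    by_cases hki : k = i
    · subst hki
      rw [if_pos rfl, if_neg (fun hh : j = k => hij hh.symm), add_zero, cval1 k j hij z]
    · by_cases hkj : k = j
      · subst hkj
        rw [if_neg (fun hh : i = k => hki hh.symm), if_pos rfl, zero_add, cval2 i k hij z]
      · rw [if_neg (fun hh : i = k => hki hh.symm), if_neg (fun hh : j = k => hkj hh.symm),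
          add_zero, cval3 i j k hij hki hkj z]
  have Φπ : ∀ (i : I) (a : H₁), Φ (P.π i a) = Finsupp.single i (P.h1 a) := by
    intro i a
    ext k
    rw [Φ_apply, Finsupp.single_apply]
    by_cases hki : k = i
    · subst hki; rw [if_pos rfl, cval4 k a]
    · rw [if_neg (fun hh : i = k => hki hh.symm), cval5 k i a (fun hh => hki hh.symm)]
  -- injectivity
  have Φinj : Function.Injective Φ := by
    rw [injective_iff_map_eq_zero]
    intro σ h0
    have hc0 : ∀ k, c k σ = 0 := by
      intro k
      have := DFunLike.congr_fun h0 k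
      rwa [Φ_apply] at this
    have hψ0 : ∀ k, P.ψi k σ = 0 := by
      intro k
      obtain ⟨b, hb⟩ := (P.q_eq_zero_iff (zz k σ)).1 (by
        have h := hc0 k; simp only [hc] at h; exact h)
      have e : σ = gg k σ + P.π (nxt k) b := by
        conv_lhs => rw [hzz k σ]
        rw [hb, P.hcompat k (nxt k) (Ne.symm (hnxt k)), map_zero, zero_add]
      rw [e, map_add, P.ψi_Gk (hgg k σ), P.ψi_π, add_zero]
    obtain ⟨x, hx⟩ := P.mem_range_Λ σ hψ0
    have hcx : ∀ k, c k σ = P.h1 (x k) := by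
      intro k
      set cH : Sg →+ P.HQ := AddMonoidHom.mk' (c k) (c_add k) with hcH
      have e1 : c k σ = cH σ := rfl
      rw [e1, ← hx, P.Λ_apply, map_finsuppSum]
      have e2 : ∀ i ∈ x.support, cH (P.π i (x i)) =
          (fun i v => if i = k then P.h1 v else 0) i (x i) := by
        intro i _
        simp only []
        by_cases hik : i = k
        · subst hik; rw [if_pos rfl]; exact cval4 i (x i)
        · rw [if_neg hik]; exact cval5 k i (x i) hik
      rw [Finsupp.sum_congr (g2 := fun i v => if i = k then P.h1 v else 0) e2,
        Finsupp.sum_ite_eq' x k (fun _ v => P.h1 v)]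
      by_cases hmem : k ∈ x.support
      · rw [if_pos hmem]
      · rw [if_neg hmem, Finsupp.notMem_support_iff.1 hmem, map_zero]
    have hx0 : x = 0 := by
      ext k
      have h7 : P.h1 (x k) = P.h1 0 := by rw [map_zero, ← hcx k]; exact hc0 k
      simpa using P.h1_inj h7
    rw [← hx, hx0, map_zero]
  -- membership of images in X
  set X : AddSubgroup (I →₀ P.HQ) :=
    P.H0.comap (Finsupp.liftAddHom fun _ : I => AddMonoidHom.id P.HQ) with hX
  have memX : ∀ f : I →₀ P.HQ, f ∈ X ↔ (f.sum fun _ h => h) ∈ P.H0 := by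
    intro f
    rw [hX, AddSubgroup.mem_comap]
    have : (Finsupp.liftAddHom (α := I) (M := P.HQ) fun _ => AddMonoidHom.id P.HQ) f
        = f.sum fun _ h => h := by
      rw [Finsupp.liftAddHom_apply]
      rfl
    rw [this]
  have hXall : ∀ σ : Sg, Φ σ ∈ X := by
    intro σ
    have hσ : σ ∈ AddSubgroup.closure
        (⋃ (i : I) (j : I) (_ : i ≠ j), Set.range (P.π₂ i j)) := by rw [P.hgen]; trivial
    have hle : AddSubgroup.closure (⋃ (i : I) (j : I) (_ : i ≠ j), Set.range (P.π₂ i j))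
        ≤ X.comap Φ := by
      rw [AddSubgroup.closure_le]
      rintro _ hs
      obtain ⟨i, j, hij, z, rfl⟩ := by simpa only [Set.mem_iUnion] using hs
      show Φ (P.π₂ i j z) ∈ X
      rw [Φπ₂ i j hij z, memX, Finsupp.sum_add_index (fun _ _ => rfl) (fun _ _ _ _ => rfl),
        Finsupp.sum_single_index rfl, Finsupp.sum_single_index rfl, P.q_add_sc θ z]
      exact ⟨θ z, rfl⟩
    exact AddSubgroup.mem_comap.1 (hle hσ)
  -- surjectivity onto X
  have Φsurj : ∀ f : I →₀ P.HQ, f ∈ X → ∃ σ, Φ σ = f := by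
    have key : ∀ (n : ℕ) (f : I →₀ P.HQ), f.support.card ≤ n → f ∈ X → ∃ σ, Φ σ = f := by
      intro n
      induction n with
      | zero =>
        intro f hcard _
        have : f = 0 := by
          rw [← Finsupp.support_eq_empty]
          exact Finset.card_eq_zero.1 (Nat.le_zero.1 hcard)
        exact ⟨0, by rw [map_zero, this]⟩
      | succ n IH =>
        intro f hcard hf
        by_cases h0 : f.support.card ≤ n
        · exact IH f h0 hf
        · by_cases h1 : f.support.card = 1
          · obtain ⟨i, hb0, hfs⟩ := Finsupp.card_support_eq_one.1 h1
            have hsum : (f.sum fun _ h => h) ∈ P.H0 := (memX f).1 hf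
            rw [Finsupp.sum_congr (g2 := fun _ h => h) (fun _ _ => rfl)] at hsum
            conv at hsum => rw [hfs]
            rw [Finsupp.sum_single_index rfl] at hsum
            obtain ⟨a, ha⟩ := hsum
            refine ⟨P.π i a, ?_⟩
            rw [Φπ, ha]
            exact hfs.symm
          · have h2 : 1 < f.support.card := by omega
            obtain ⟨i, hi, j, hj, hij⟩ := Finset.one_lt_card.1 h2
            obtain ⟨z, hz1, hz2⟩ := P.ρ_surj θ hθι (f i) (-(f i))
              (by rw [add_neg_cancel]; exact zero_mem _)
            have hφz : Φ (P.π₂ i j z)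
                = Finsupp.single i (f i) + Finsupp.single j (-(f i)) := by
              rw [Φπ₂ i j hij z, hz1, hz2]
            set f' := f - Φ (P.π₂ i j z) with hf'
            have hf'k : ∀ k : I, f' k = f k -
                ((Finsupp.single i (f i)) k + (Finsupp.single j (-(f i))) k) := by
              intro k
              rw [hf', Finsupp.sub_apply, hφz, Finsupp.add_apply]
            have hsupp' : f'.support ⊆ f.support.erase i := by
              intro k hk
              rw [Finsupp.mem_support_iff] at hk
              rw [Finset.mem_erase]
              constructor
              · intro hki
                subst hki
                apply hk
                rw [hf'k, Finsupp.single_eq_same,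
                  Finsupp.single_eq_of_ne' (fun hh : j = k => hij hh.symm), add_zero, sub_self]
              · by_cases hkj : k = j
                · subst hkj; exact hj
                · by_cases hki : k = i
                  · subst hki; exact hi
                  · rw [Finsupp.mem_support_iff]
                    intro hfk
                    apply hk
                    rw [hf'k, Finsupp.single_eq_of_ne' (fun hh : i = k => hki hh.symm),
                      Finsupp.single_eq_of_ne' (fun hh : j = k => hkj hh.symm), hfk]
                    simp
            have hcard' : f'.support.card ≤ n := by
              have := Finset.card_le_card hsupp'
              rw [Finset.card_erase_of_mem hi] at this
              omega
            have hf'X : f' ∈ X := by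
              rw [hf']
              exact sub_mem hf (hXall _)
            obtain ⟨σ', hσ'⟩ := IH f' hcard' hf'X
            refine ⟨σ' + P.π₂ i j z, ?_⟩
            rw [map_add, hσ', hf']
            abel
    exact fun f hf => key _ f le_rfl hf
  -- the three isomorphisms
  have e1bij : Function.Bijective P.h1.rangeRestrict := by
    constructor
    · intro a b hab
      apply P.h1_inj
      have := congrArg (Subtype.val) hab
      simpa [AddMonoidHom.coe_rangeRestrict] using this
    · exact P.h1.rangeRestrict_surjective
  set e1 : H₁ ≃+ P.H0 := AddEquiv.ofBijective P.h1.rangeRestrict e1bij with he1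
  set X₂ : AddSubgroup (P.HQ × P.HQ) :=
    P.H0.comap (AddMonoidHom.fst P.HQ P.HQ + AddMonoidHom.snd P.HQ P.HQ) with hX₂
  have memX₂ : ∀ w : P.HQ × P.HQ, w ∈ X₂ ↔ w.1 + w.2 ∈ P.H0 := by
    intro w
    rw [hX₂, AddSubgroup.mem_comap]
    simp [AddMonoidHom.add_apply]
  have ρmem : ∀ z : H₂, (P.q.prod (P.sc θ)) z ∈ X₂ := by
    intro z
    rw [memX₂]
    show P.q z + P.sc θ z ∈ P.H0
    rw [P.q_add_sc θ z]
    exact ⟨θ z, rfl⟩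
  set ρ2 : H₂ →+ X₂ := (P.q.prod (P.sc θ)).codRestrict X₂ ρmem with hρ2
  have ρ2bij : Function.Bijective ρ2 := by
    constructor
    · intro z z' hzz'
      have h := congrArg Subtype.val hzz'
      have h1 : P.q z = P.q z' := congrArg Prod.fst h
      have h2 : P.sc θ z = P.sc θ z' := congrArg Prod.snd h
      have := P.ρ_inj θ hθι (z - z') (by rw [map_sub, h1, sub_self])
        (by rw [map_sub, h2, sub_self])
      exact sub_eq_zero.1 this
    · rintro ⟨⟨x, y⟩, hw⟩
      obtain ⟨z, hza, hzb⟩ := P.ρ_surj θ hθι x y ((memX₂ _).1 hw)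
      exact ⟨z, Subtype.ext (Prod.ext hza hzb)⟩
  set e2 : H₂ ≃+ X₂ := AddEquiv.ofBijective ρ2 ρ2bij with he2
  set Φ' : Sg →+ X := Φ.codRestrict X hXall with hΦ'
  have Φ'bij : Function.Bijective Φ' := by
    constructor
    · intro a b hab
      exact Φinj (congrArg Subtype.val hab)
    · rintro ⟨f, hf⟩
      obtain ⟨σ, hσ⟩ := Φsurj f hf
      exact ⟨σ, Subtype.ext hσ⟩
  refine ⟨P.HQ, inferInstance, P.H0, e1.symm, e2.symm,
    (AddEquiv.ofBijective Φ' Φ'bij).symm, ?_, ?_, ?_⟩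
  · intro β s
    simp only [AddEquiv.symm_symm]
    have hcoe : ∀ t : Sg, ((AddEquiv.ofBijective Φ' Φ'bij t : X) : I →₀ P.HQ) = Φ t :=
      fun t => rfl
    rw [hcoe, hcoe]
    ext k
    rw [Φ_apply, cequiv β k s, Finsupp.equivMapDomain_apply, Φ_apply]
  · intro i a
    simp only [AddEquiv.symm_symm]
    have hcoe : ∀ t : Sg, ((AddEquiv.ofBijective Φ' Φ'bij t : X) : I →₀ P.HQ) = Φ t :=
      fun t => rfl
    rw [hcoe, Φπ]
    congr 1
    have : P.h1 (e1.symm a) = ((e1 (e1.symm a) : P.H0) : P.HQ) := by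
      rw [he1]
      exact (P.h1.coe_rangeRestrict _).symm
    rw [this, AddEquiv.apply_symm_apply]
  · intro i j hij w
    simp only [AddEquiv.symm_symm]
    have hcoe : ∀ t : Sg, ((AddEquiv.ofBijective Φ' Φ'bij t : X) : I →₀ P.HQ) = Φ t :=
      fun t => rfl
    rw [hcoe, Φπ₂ i j hij]
    have key2 : ((e2 (e2.symm w) : X₂) : P.HQ × P.HQ) = ((P.q.prod (P.sc θ)) (e2.symm w)) := by
      rw [he2, AddEquiv.ofBijective_apply]
      rfl
    rw [AddEquiv.apply_symm_apply] at key2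
    have h1' : P.q (e2.symm w) = (w : P.HQ × P.HQ).1 := (congrArg Prod.fst key2).symm
    have h2' : P.sc θ (e2.symm w) = (w : P.HQ × P.HQ).2 := (congrArg Prod.snd key2).symm
    rw [h1', h2']

end Pkg

/-- the combinatorial reconstruction lemma. Given a countable abelian group
`Σ = Sg`, a countably infinite index set `I`, abelian groups `H₁`, `H₂` with an embedding
`H₁ × H₁ ↪ H₂`, injections `π i : H₁ → Σ` (in direct sum position, generating `Σ₁`) and
`π₂ i j : H₂ → Σ` (for `i ≠ j`, jointly generating `Σ`) with `π₂ i j (a,b) = π i a + π j b`,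
homomorphisms `ψi i : Σ → L`, `ψ : H₂ → L` with `ψi i ∘ π₂ i j = ψ = −(ψi j ∘ π₂ i j)`,
`ψi k ∘ π₂ i j = 0` for `k ∉ {i,j}`, `Σ₁ = ⋂ ker (ψi i)`, and a `Perm I`-action `γ` with
`γ β ∘ π i = π (β i)`, `γ β ∘ π₂ i j = π₂ (β i) (β j)`, there exist an abelian group `H`
with subgroup `H₀` and isomorphisms `δ₁ : H₀ ≅ H₁`, `δ₂ : (H × H)_{H₀} ≅ H₂` and a
`Perm I`-equivariant isomorphism `δ : p_H⁻¹(H₀) ≅ Σ` intertwining the coordinate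
embeddings with the `π i` and `π₂ i j`. -/
theorem stmt_12 {Sg H₁ H₂ L I : Type}
    [AddCommGroup Sg] [Countable Sg] [AddCommGroup H₁] [AddCommGroup H₂] [AddCommGroup L]
    [Countable I] [Infinite I]
    (ι : H₁ × H₁ →+ H₂) (hι : Function.Injective ι)
    (π : I → H₁ →+ Sg) (hπinj : ∀ i, Function.Injective (π i))
    (π₂ : I → I → H₂ →+ Sg) (hπ₂inj : ∀ i j, i ≠ j → Function.Injective (π₂ i j))
    (ψi : I → Sg →+ L) (ψ : H₂ →+ L)
    (γ : Equiv.Perm I →* Multiplicative (AddAut Sg))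
    (hgen : AddSubgroup.closure
      (⋃ (i : I) (j : I) (_ : i ≠ j), Set.range (π₂ i j)) = ⊤)
    (hdirect : Function.Injective fun x : I →₀ H₁ => x.sum fun i a => π i a)
    (hcompat : ∀ i j, i ≠ j → ∀ a b : H₁, π₂ i j (ι (a, b)) = π i a + π j b)
    (hψ₁ : ∀ i j, i ≠ j → ∀ x : H₂, ψi i (π₂ i j x) = ψ x)
    (hψ₂ : ∀ i j, i ≠ j → ∀ x : H₂, ψi j (π₂ i j x) = - ψ x)
    (hψ₃ : ∀ i j k, i ≠ j → k ≠ i → k ≠ j → ∀ x : H₂, ψi k (π₂ i j x) = 0)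
    (hker : AddSubgroup.closure (⋃ i : I, Set.range (π i)) = ⨅ i : I, (ψi i).ker)
    (hequiv₁ : ∀ (β : Equiv.Perm I) (i : I) (a : H₁), Multiplicative.toAdd (γ β) (π i a) = π (β i) a)
    (hequiv₂ : ∀ (β : Equiv.Perm I) (i j : I), i ≠ j → ∀ x : H₂,
      Multiplicative.toAdd (γ β) (π₂ i j x) = π₂ (β i) (β j) x) :
    ∃ (H : Type) (_ : AddCommGroup H) (H₀ : AddSubgroup H)
      (δ₁ : H₀ ≃+ H₁)
      (δ₂ : (H₀.comap (AddMonoidHom.fst H H + AddMonoidHom.snd H H)) ≃+ H₂)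
      (δ : (H₀.comap (Finsupp.liftAddHom fun _ : I => AddMonoidHom.id H)) ≃+ Sg),
      (∀ (β : Equiv.Perm I) (s : Sg),
        ((δ.symm (Multiplicative.toAdd (γ β) s) : I →₀ H)) = Finsupp.equivMapDomain β (δ.symm s : I →₀ H)) ∧
      (∀ (i : I) (a : H₀),
        ((δ.symm (π i (δ₁ a)) : I →₀ H)) = Finsupp.single i (a : H)) ∧
      (∀ (i j : I), i ≠ j →
        ∀ z : (H₀.comap (AddMonoidHom.fst H H + AddMonoidHom.snd H H)),
          ((δ.symm (π₂ i j (δ₂ z)) : I →₀ H)) =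
            Finsupp.single i (z : H × H).1 + Finsupp.single j (z : H × H).2) := by
  exact (Pkg.mk ι hι π hπinj π₂ hπ₂inj ψi ψ (fun β => Multiplicative.toAdd (γ β)) hgen hdirect hcompat hψ₁ hψ₂ hψ₃ hker
    hequiv₁ hequiv₂).main
end

section
/- Under the hypotheses of the combinatorial lemma (abelian Σ, injections π_i : H₁ → Σ in direct sum position, injections π_{ij} : H₂ → Σ with H₁ × H₁ ⊂ H₂, homomorphisms ψ_i : Σ → L and ψ : H₂ → L with ψ_i ∘ π_{ij} = ψ = −ψ_j ∘ π_{ij}, ψ_k ∘ π_{ij} = 0 for k ∉ {i,j}, ⋂ ker ψ_i = ⟨π_i(H₁)⟩, and a Perm(ℕ)-action with γ_β ∘ π_{ij} = π_{β(i),β(j)}), define ρ : H₂ → H₁ so that π₁₂(x) + π₂₃(x) + π₃₁(x) = π₁(ρ(x)) + π₂(ρ(x)) + π₃(ρ(x)), and H := ker ρ. Then for all x ∈ H and all distinct i,j,k ∈ ℕ: π_{ij}(x) + π_{jk}(x) = π_{ik}(x). -/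
/-!
The defect `Y(a,b,c) = π_{ab} x + π_{bc} x - π_{ac} x` is killed by every `ψ_m`, hence lies in
`⨁ₘ π_m(H₁)`, and it is `Perm(ℕ)`-equivariant. Permutations fixing `a, b, c` fix `Y(a,b,c)`,
which confines it to the coordinates `a, b, c`; transitivity on triples then gives
`Y(a,b,c) = π_a A + π_b B + π_c C` with `A, B, C` independent of the triple. The relation
`Y(1,2,3) + Y(1,3,4) = Y(1,2,4) + Y(2,3,4)` forces `A = C = 0`. Finally, if `ρ x = 0` then
`Y(1,2,3) = -(π₃₁ x + π₁₃ x)` is fixed by the transposition `(2 4)`, which forces `B = 0`.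
-/

theorem Equiv.Perm.exists_apply_eq_of_three {α : Type*} {a b c a' b' c' : α}
    (hab : a ≠ b) (hbc : b ≠ c) (hac : a ≠ c) (hab' : a' ≠ b') (hbc' : b' ≠ c') (hac' : a' ≠ c') :
    ∃ σ : Equiv.Perm α, σ a = a' ∧ σ b = b' ∧ σ c = c' := by
  have injective_of_ne {x y z : α} (hxy : x ≠ y) (hyz : y ≠ z) (hxz : x ≠ z) :
      Function.Injective ![x, y, z] := by
    intro p q; fin_cases p <;> fin_cases q <;> simp_all [eq_comm]
  obtain ⟨σ, hσ⟩ := Equiv.Perm.exists_extending_pair _ _ (injective_of_ne hab hbc hac)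
    (injective_of_ne hab' hbc' hac')
  exact ⟨σ, hσ 0, hσ 1, hσ 2⟩

theorem Finsupp.support_subset_of_forall_equivMapDomain_eq {α M : Type*} [Infinite α] [Zero M]
    {f : α →₀ M} {s : Finset α}
    (h : ∀ σ : Equiv.Perm α, (∀ a ∈ s, σ a = a) → f.equivMapDomain σ = f) : f.support ⊆ s := by
  classical
  intro m hm
  by_contra hms
  obtain ⟨m', hm'⟩ := Infinite.exists_notMem_finset (s ∪ f.support)
  obtain ⟨hm's, hm'f⟩ := not_or.mp (Finset.mem_union.not.mp hm')
  have hfix : ∀ a ∈ s, Equiv.swap m m' a = a := fun a ha =>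
    Equiv.swap_apply_of_ne_of_ne (by rintro rfl; exact hms ha) (by rintro rfl; exact hm's ha)
  have hfm : f m = f m' := by
    conv_lhs => rw [← h _ hfix]
    rw [Finsupp.equivMapDomain_apply, Equiv.symm_swap, Equiv.swap_apply_left]
  exact Finsupp.mem_support_iff.mp hm (hfm ▸ Finsupp.notMem_support_iff.mp hm'f)

theorem Finsupp.liftAddHom_apply_of_support_subset_three {ι M N : Type*} [DecidableEq ι]
    [AddCommMonoid M] [AddCommMonoid N] (φ : ι → M →+ N) {f : ι →₀ M} {a b c : ι}
    (hab : a ≠ b) (hbc : b ≠ c) (hac : a ≠ c) (hf : f.support ⊆ {a, b, c}) :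
    Finsupp.liftAddHom φ f = φ a (f a) + φ b (f b) + φ c (f c) := by
  rw [Finsupp.liftAddHom_apply, Finsupp.sum_of_support_subset f hf _ fun i _ => map_zero (φ i),
    Finset.sum_insert (by simp [hab, hac]), Finset.sum_pair hbc, add_assoc]

section
variable {ι Sg H₁ H₂ L : Type*} [AddCommGroup Sg] [AddCommGroup H₁] [AddCommGroup H₂]
  [AddCommGroup L]

def cocycleDefect (π₂ : ι → ι → H₂ →+ Sg) (x : H₂) (i j k : ι) : Sg :=
  π₂ i j x + π₂ j k x - π₂ i k x

theorem cocycleDefect_add_cocycleDefect (π₂ : ι → ι → H₂ →+ Sg) (x : H₂) (a b c d : ι) :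
    cocycleDefect π₂ x a b c + cocycleDefect π₂ x a c d
      = cocycleDefect π₂ x a b d + cocycleDefect π₂ x b c d := by
  simp only [cocycleDefect]; abel

theorem cocycleDefect_mem_iInf_ker {π₂ : ι → ι → H₂ →+ Sg} {ψi : ι → Sg →+ L} {ψ : H₂ →+ L}
    (hψ₁ : ∀ i j, i ≠ j → ∀ x : H₂, ψi i (π₂ i j x) = ψ x)
    (hψ₂ : ∀ i j, i ≠ j → ∀ x : H₂, ψi j (π₂ i j x) = - ψ x)
    (hψ₃ : ∀ i j k, i ≠ j → k ≠ i → k ≠ j → ∀ x : H₂, ψi k (π₂ i j x) = 0)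
    (x : H₂) {a b c : ι} (hab : a ≠ b) (hbc : b ≠ c) (hac : a ≠ c) :
    cocycleDefect π₂ x a b c ∈ ⨅ m, (ψi m).ker := by
  refine AddSubgroup.mem_iInf.mpr fun m => ?_
  simp only [AddMonoidHom.mem_ker, cocycleDefect, map_sub, map_add]
  by_cases hma : m = a
  · subst hma
    rw [hψ₁ _ _ hab, hψ₃ _ _ _ hbc hab hac, hψ₁ _ _ hac]; abel
  by_cases hmb : m = b
  · subst hmb
    rw [hψ₂ _ _ hab, hψ₁ _ _ hbc, hψ₃ _ _ _ hac hma hbc]; abel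
  by_cases hmc : m = c
  · subst hmc
    rw [hψ₃ _ _ _ hab hac.symm hbc.symm, hψ₂ _ _ hbc, hψ₂ _ _ hac]; abel
  rw [hψ₃ _ _ _ hab hma hmb, hψ₃ _ _ _ hbc hmb hmc, hψ₃ _ _ _ hac hma hmc]; abel

theorem map_cocycleDefect {π₂ : ι → ι → H₂ →+ Sg} {γ : Equiv.Perm ι →* Multiplicative (AddAut Sg)}
    (hequiv₂ : ∀ (β : Equiv.Perm ι) (i j : ι), i ≠ j → ∀ x : H₂,
      Multiplicative.toAdd (γ β) (π₂ i j x) = π₂ (β i) (β j) x)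
    (σ : Equiv.Perm ι) (x : H₂) {a b c : ι} (hab : a ≠ b) (hbc : b ≠ c) (hac : a ≠ c) :
    Multiplicative.toAdd (γ σ) (cocycleDefect π₂ x a b c)
      = cocycleDefect π₂ x (σ a) (σ b) (σ c) := by
  simp only [cocycleDefect, map_sub, map_add, hequiv₂ σ _ _ hab, hequiv₂ σ _ _ hbc,
    hequiv₂ σ _ _ hac]

theorem closure_iUnion_range_le_range_liftAddHom (π : ι → H₁ →+ Sg) :
    AddSubgroup.closure (⋃ i, Set.range (π i)) ≤ (Finsupp.liftAddHom π).range := by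
  rw [AddSubgroup.closure_le]
  rintro _ ⟨_, ⟨i, rfl⟩, a, rfl⟩
  exact ⟨Finsupp.single i a, Finsupp.liftAddHom_apply_single π i a⟩

theorem map_liftAddHom {π : ι → H₁ →+ Sg} {γ : Equiv.Perm ι →* Multiplicative (AddAut Sg)}
    (hequiv₁ : ∀ (β : Equiv.Perm ι) (i : ι) (a : H₁),
      Multiplicative.toAdd (γ β) (π i a) = π (β i) a)
    (σ : Equiv.Perm ι) (f : ι →₀ H₁) :
    Multiplicative.toAdd (γ σ) (Finsupp.liftAddHom π f)
      = Finsupp.liftAddHom π (f.equivMapDomain σ) := by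
  simp only [Finsupp.liftAddHom_apply, Finsupp.sum_equivMapDomain, map_finsuppSum, hequiv₁]

theorem exists_eq_of_equivariant [Infinite ι] {π : ι → H₁ →+ Sg}
    {γ : Equiv.Perm ι →* Multiplicative (AddAut Sg)}
    (hdirect : Function.Injective (Finsupp.liftAddHom π))
    (hequiv₁ : ∀ (β : Equiv.Perm ι) (i : ι) (a : H₁),
      Multiplicative.toAdd (γ β) (π i a) = π (β i) a)
    {Y : ι → ι → ι → Sg}
    (hY : ∀ a b c, a ≠ b → b ≠ c → a ≠ c → Y a b c ∈ (Finsupp.liftAddHom π).range)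
    (hYequiv : ∀ (σ : Equiv.Perm ι) a b c, a ≠ b → b ≠ c → a ≠ c →
      Multiplicative.toAdd (γ σ) (Y a b c) = Y (σ a) (σ b) (σ c)) :
    ∃ A B C : H₁, ∀ a b c, a ≠ b → b ≠ c → a ≠ c → Y a b c = π a A + π b B + π c C := by
  classical
  let e := Infinite.natEmbedding ι
  have h₀₁ : e 0 ≠ e 1 := e.injective.ne (by decide)
  have h₁₂ : e 1 ≠ e 2 := e.injective.ne (by decide)
  have h₀₂ : e 0 ≠ e 2 := e.injective.ne (by decide)
  obtain ⟨f, hf⟩ := hY _ _ _ h₀₁ h₁₂ h₀₂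
  have hsupp : f.support ⊆ {e 0, e 1, e 2} := by
    refine Finsupp.support_subset_of_forall_equivMapDomain_eq fun σ hσ => hdirect ?_
    rw [← map_liftAddHom hequiv₁, hf, hYequiv σ _ _ _ h₀₁ h₁₂ h₀₂, hσ _ (by simp),
      hσ _ (by simp), hσ _ (by simp)]
  refine ⟨f (e 0), f (e 1), f (e 2), fun a b c hab hbc hac => ?_⟩
  obtain ⟨σ, rfl, rfl, rfl⟩ := Equiv.Perm.exists_apply_eq_of_three h₀₁ h₁₂ h₀₂ hab hbc hac
  rw [← hYequiv σ _ _ _ h₀₁ h₁₂ h₀₂, ← hf,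
    Finsupp.liftAddHom_apply_of_support_subset_three π h₀₁ h₁₂ h₀₂ hsupp]
  simp only [map_add, hequiv₁]

end

section
variable {Sg H₁ H₂ : Type*} [AddCommGroup Sg] [AddCommGroup H₁] [AddCommGroup H₂]
  {π : ℕ → H₁ →+ Sg} {π₂ : ℕ → ℕ → H₂ →+ Sg} {x : H₂} {A B C : H₁}

theorem eq_zero_of_cocycleDefect_eq_left_right
    (hdirect : Function.Injective (Finsupp.liftAddHom π))
    (hY : ∀ a b c, a ≠ b → b ≠ c → a ≠ c → cocycleDefect π₂ x a b c = π a A + π b B + π c C) :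
    A = 0 ∧ C = 0 := by
  have h := cocycleDefect_add_cocycleDefect π₂ x 1 2 3 4
  rw [hY 1 2 3 (by decide) (by decide) (by decide), hY 1 3 4 (by decide) (by decide) (by decide),
    hY 1 2 4 (by decide) (by decide) (by decide), hY 2 3 4 (by decide) (by decide) (by decide)] at h
  have hsingle : Finsupp.single 1 A + Finsupp.single 3 C
      = Finsupp.single 2 A + Finsupp.single 4 C := hdirect <| by
    simp only [map_add, Finsupp.liftAddHom_apply_single]
    rw [← sub_eq_zero, ← sub_eq_zero.mpr h]; abel
  exact ⟨by simpa using congr($hsingle 1), by simpa using congr($hsingle 3)⟩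

theorem eq_zero_of_cocycleDefect_eq_middle {γ : Equiv.Perm ℕ →* Multiplicative (AddAut Sg)}
    (hdirect : Function.Injective (Finsupp.liftAddHom π))
    (hequiv₂ : ∀ (β : Equiv.Perm ℕ) (i j : ℕ), i ≠ j → ∀ x : H₂,
      Multiplicative.toAdd (γ β) (π₂ i j x) = π₂ (β i) (β j) x)
    (hcyc : π₂ 1 2 x + π₂ 2 3 x + π₂ 3 1 x = 0)
    (hY : ∀ a b c, a ≠ b → b ≠ c → a ≠ c → cocycleDefect π₂ x a b c = π a A + π b B + π c C) :
    B = 0 := by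
  have hmid : cocycleDefect π₂ x 1 2 3 = -(π₂ 3 1 x + π₂ 1 3 x) := by
    rw [cocycleDefect, ← sub_eq_zero, ← hcyc]; abel
  have hswap : cocycleDefect π₂ x 1 4 3 = cocycleDefect π₂ x 1 2 3 := by
    have h := map_cocycleDefect hequiv₂ (Equiv.swap 2 4) x (a := 1) (b := 2) (c := 3)
      (by decide) (by decide) (by decide)
    rw [hmid, map_neg, map_add, hequiv₂ _ 3 1 (by decide), hequiv₂ _ 1 3 (by decide)] at h
    simp only [Equiv.swap_apply_left, Equiv.swap_apply_of_ne_of_ne (by decide : (1 : ℕ) ≠ 2)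
      (by decide : (1 : ℕ) ≠ 4), Equiv.swap_apply_of_ne_of_ne (by decide : (3 : ℕ) ≠ 2)
      (by decide : (3 : ℕ) ≠ 4)] at h
    rw [← h, hmid]
  rw [hY 1 4 3 (by decide) (by decide) (by decide), hY 1 2 3 (by decide) (by decide) (by decide),
    add_right_cancel_iff, add_left_cancel_iff] at hswap
  have hsingle : Finsupp.single 4 B = Finsupp.single 2 B := hdirect <| by
    simpa only [Finsupp.liftAddHom_apply_single] using hswap
  simpa using congr($hsingle 2).symm

end

theorem stmt_13_general {Sg H₁ H₂ L : Type*}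
    [AddCommGroup Sg] [AddCommGroup H₁] [AddCommGroup H₂] [AddCommGroup L]
    (π : ℕ → H₁ →+ Sg)
    (π₂ : ℕ → ℕ → H₂ →+ Sg)
    (ψi : ℕ → Sg →+ L) (ψ : H₂ →+ L)
    (γ : Equiv.Perm ℕ →* Multiplicative (AddAut Sg))
    (hdirect : Function.Injective fun x : ℕ →₀ H₁ => x.sum fun i a => π i a)
    (hψ₁ : ∀ i j, i ≠ j → ∀ x : H₂, ψi i (π₂ i j x) = ψ x)
    (hψ₂ : ∀ i j, i ≠ j → ∀ x : H₂, ψi j (π₂ i j x) = - ψ x)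
    (hψ₃ : ∀ i j k, i ≠ j → k ≠ i → k ≠ j → ∀ x : H₂, ψi k (π₂ i j x) = 0)
    (hker : AddSubgroup.closure (⋃ i : ℕ, Set.range (π i)) = ⨅ i : ℕ, (ψi i).ker)
    (hequiv₁ : ∀ (β : Equiv.Perm ℕ) (i : ℕ) (a : H₁), Multiplicative.toAdd (γ β) (π i a) = π (β i) a)
    (hequiv₂ : ∀ (β : Equiv.Perm ℕ) (i j : ℕ), i ≠ j → ∀ x : H₂,
      Multiplicative.toAdd (γ β) (π₂ i j x) = π₂ (β i) (β j) x)
    (ρ : H₂ →+ H₁)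
    (hρ : ∀ x : H₂, π₂ 1 2 x + π₂ 2 3 x + π₂ 3 1 x
      = π 1 (ρ x) + π 2 (ρ x) + π 3 (ρ x)) :
    ∀ x : H₂, ρ x = 0 → ∀ i j k : ℕ, i ≠ j → j ≠ k → i ≠ k →
      π₂ i j x + π₂ j k x = π₂ i k x := by
  intro x hx i j k hij hjk hik
  have hinj : Function.Injective (Finsupp.liftAddHom π) := hdirect
  obtain ⟨A, B, C, hY⟩ := exists_eq_of_equivariant hinj hequiv₁
    (fun a b c hab hbc hac => closure_iUnion_range_le_range_liftAddHom π <|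
      hker ▸ cocycleDefect_mem_iInf_ker hψ₁ hψ₂ hψ₃ x hab hbc hac)
    (fun σ a b c => map_cocycleDefect hequiv₂ σ x)
  have hcyc : π₂ 1 2 x + π₂ 2 3 x + π₂ 3 1 x = 0 := by simp [hρ, hx]
  obtain ⟨rfl, rfl⟩ := eq_zero_of_cocycleDefect_eq_left_right hinj hY
  obtain rfl := eq_zero_of_cocycleDefect_eq_middle hinj hequiv₂ hcyc hY
  have hzero : cocycleDefect π₂ x i j k = 0 := by simpa using hY i j k hij hjk hik
  exact sub_eq_zero.mp hzero

/-- under the hypotheses of the combinatorial lemma with `I = ℕ`, let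
`ρ : H₂ → H₁` be the homomorphism satisfying
`π₁₂(x) + π₂₃(x) + π₃₁(x) = π₁(ρ x) + π₂(ρ x) + π₃(ρ x)` and set `H := ker ρ`. Then for
every `x ∈ H` and all distinct `i, j, k`: `π_{ij}(x) + π_{jk}(x) = π_{ik}(x)`. -/
theorem stmt_13 {Sg H₁ H₂ L : Type*}
    [AddCommGroup Sg] [Countable Sg] [AddCommGroup H₁] [AddCommGroup H₂] [AddCommGroup L]
    (ι : H₁ × H₁ →+ H₂) (hι : Function.Injective ι)
    (π : ℕ → H₁ →+ Sg) (hπinj : ∀ i, Function.Injective (π i))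
    (π₂ : ℕ → ℕ → H₂ →+ Sg) (hπ₂inj : ∀ i j, i ≠ j → Function.Injective (π₂ i j))
    (ψi : ℕ → Sg →+ L) (ψ : H₂ →+ L)
    (γ : Equiv.Perm ℕ →* Multiplicative (AddAut Sg))
    (hgen : AddSubgroup.closure
      (⋃ (i : ℕ) (j : ℕ) (_ : i ≠ j), Set.range (π₂ i j)) = ⊤)
    (hdirect : Function.Injective fun x : ℕ →₀ H₁ => x.sum fun i a => π i a)
    (hcompat : ∀ i j, i ≠ j → ∀ a b : H₁, π₂ i j (ι (a, b)) = π i a + π j b)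
    (hψ₁ : ∀ i j, i ≠ j → ∀ x : H₂, ψi i (π₂ i j x) = ψ x)
    (hψ₂ : ∀ i j, i ≠ j → ∀ x : H₂, ψi j (π₂ i j x) = - ψ x)
    (hψ₃ : ∀ i j k, i ≠ j → k ≠ i → k ≠ j → ∀ x : H₂, ψi k (π₂ i j x) = 0)
    (hker : AddSubgroup.closure (⋃ i : ℕ, Set.range (π i)) = ⨅ i : ℕ, (ψi i).ker)
    (hequiv₁ : ∀ (β : Equiv.Perm ℕ) (i : ℕ) (a : H₁), Multiplicative.toAdd (γ β) (π i a) = π (β i) a)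
    (hequiv₂ : ∀ (β : Equiv.Perm ℕ) (i j : ℕ), i ≠ j → ∀ x : H₂,
      Multiplicative.toAdd (γ β) (π₂ i j x) = π₂ (β i) (β j) x)
    (ρ : H₂ →+ H₁)
    (hρ : ∀ x : H₂, π₂ 1 2 x + π₂ 2 3 x + π₂ 3 1 x
      = π 1 (ρ x) + π 2 (ρ x) + π 3 (ρ x)) :
    ∀ x : H₂, ρ x = 0 → ∀ i j k : ℕ, i ≠ j → j ≠ k → i ≠ k →
      π₂ i j x + π₂ j k x = π₂ i k x :=
  stmt_13_general π π₂ ψi ψ γ hdirect hψ₁ hψ₂ hψ₃ hker hequiv₁ hequiv₂ ρ hρ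
end
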